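/- arXiv:math/0307236 — 6 statements merged into one kernel-verified Lean document; each statement's English description precedes it below -/
import Mathlib

section
/- Let P be a nonempty finite set of vectors in ℤ_+^n that contains, with each u ∈ P, all v ∈ ℤ_+^n with v ≤ u, and let B(P) be the set of maximal elements of P with respect to ≤. Then the following are equivalent: (a) P is a discrete polymatroid; (b) for all u, v ∈ P with |v| > |u| there is an index i with u + ε_i ∈ P and u + ε_i ≤ u ∨ v; (c) all elements of B(P) have the same modulus, and for all u, v ∈ B(P) and every i with u(i) > v(i) there exists j with u(j) < v(j) such that u − ε_i + ε_j ∈ B(P). -/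
/-- A discrete polymatroid on the ground set `[n]`. -/
def IsDiscretePolymatroid {n : ℕ} (P : Set (Fin n → ℕ)) : Prop :=
  P.Nonempty ∧ P.Finite ∧
    (∀ u ∈ P, ∀ v : Fin n → ℕ, v ≤ u → v ∈ P) ∧
    (∀ u ∈ P, ∀ v ∈ P, ∑ i, u i < ∑ i, v i → ∃ w ∈ P, u < w ∧ w ≤ u ⊔ v)

/-- A base of `P` is a maximal element of `P`. -/
def IsBaseOf {n : ℕ} (P : Set (Fin n → ℕ)) (u : Fin n → ℕ) : Prop :=
  u ∈ P ∧ ∀ v ∈ P, u ≤ v → v = u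

-- Auxiliary lemmas
private lemma pm_sum_add_single {n : ℕ} (u : Fin n → ℕ) (i : Fin n) :
    ∑ j : Fin n, (u + Pi.single i 1 : Fin n → ℕ) j = (∑ j : Fin n, u j) + 1 := by
  simp [Finset.sum_add_distrib]

private lemma pm_le_sum {n : ℕ} {u v : Fin n → ℕ} (h : u ≤ v) : ∑ i, u i ≤ ∑ i, v i :=
  Finset.sum_le_sum fun i _ => h i

private lemma pm_eq_of_le_of_sum_le {n : ℕ} {u v : Fin n → ℕ} (h : u ≤ v)
    (h2 : ∑ i, v i ≤ ∑ i, u i) : v = u := by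
  by_contra hne
  have hex : ∃ i, u i < v i := by
    by_contra hc; push_neg at hc
    exact hne (funext fun i => le_antisymm (hc i) (h i))
  obtain ⟨i, hi⟩ := hex
  have := Finset.sum_lt_sum (fun j (_ : j ∈ Finset.univ) => h j) ⟨i, Finset.mem_univ i, hi⟩
  omega

private lemma pm_le_add_single {n : ℕ} (u : Fin n → ℕ) (i : Fin n) :
    u ≤ u + Pi.single i 1 := fun k => Nat.le_add_right _ _

private lemma pm_add_single_le {n : ℕ} {u w : Fin n → ℕ} {i : Fin n}
    (hi : u i < w i) (hle : u ≤ w) : u + Pi.single i 1 ≤ w := by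
  intro k
  rcases eq_or_ne k i with rfl | hk
  · simpa using hi
  · simpa [Pi.single_apply, hk] using hle k

private lemma pm_exists_base_ge {n : ℕ} {P : Set (Fin n → ℕ)} (hfin : P.Finite)
    {u : Fin n → ℕ} (hu : u ∈ P) : ∃ w, IsBaseOf P w ∧ u ≤ w := by
  obtain ⟨a, ha, hmax⟩ := Set.Finite.exists_maximalFor id {w ∈ P | u ≤ w}
    (hfin.subset (fun x hx => hx.1)) ⟨u, hu, le_refl u⟩
  exact ⟨a, ⟨ha.1, fun z hz haz => le_antisymm (hmax ⟨hz, ha.2.trans haz⟩ haz) haz⟩, ha.2⟩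

private lemma pm_aux {n : ℕ} {P : Set (Fin n → ℕ)} (hfin : P.Finite)
    (hdown : ∀ u ∈ P, ∀ v : Fin n → ℕ, v ≤ u → v ∈ P)
    (hB1 : ∀ u v, IsBaseOf P u → IsBaseOf P v → ∑ i, u i = ∑ i, v i)
    (hB2 : ∀ u v, IsBaseOf P u → IsBaseOf P v → ∀ i, v i < u i →
          ∃ j, u j < v j ∧ IsBaseOf P (u - Pi.single i 1 + Pi.single j 1)) :
    ∀ (N : ℕ) (u v : Fin n → ℕ), u ∈ P → v ∈ P → (∑ i, u i) < ∑ i, v i →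
      (∑ i, (v i - u i)) ≤ N → ∃ i, u i < v i ∧ u + Pi.single i 1 ∈ P := by
  intro N
  induction N with
  | zero =>
    intro u v _ _ hlt hN
    exfalso
    have h0 : ∀ i, v i ≤ u i := by
      intro i
      have h1 : v i - u i ≤ ∑ k, (v k - u k) :=
        Finset.single_le_sum (f := fun k => v k - u k) (fun k _ => Nat.zero_le _) (Finset.mem_univ i)
      omega
    have := pm_le_sum (fun i => h0 i)
    omega
  | succ N ih =>
    intro u v hu hv hlt hN
    by_cases hgoal : ∃ i, u i < v i ∧ u + Pi.single i 1 ∈ P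
    · exact hgoal
    push_neg at hgoal
    -- consequence C
    have hC : ∀ w ∈ P, u ≤ w → ∀ i, u i < v i → w i = u i := by
      intro w hw hle i hi
      by_contra hne
      have hwi : u i < w i := lt_of_le_of_ne (hle i) (Ne.symm hne)
      exact hgoal i hi (hdown w hw _ (pm_add_single_le hwi hle))
    -- minimal pair of bases
    obtain ⟨⟨w, b⟩, hwb, hmin⟩ := Set.Finite.exists_minimalFor
      (fun p : (Fin n → ℕ) × (Fin n → ℕ) => ∑ i, (p.1 i - p.2 i + (p.2 i - p.1 i)))
      {p | (IsBaseOf P p.1 ∧ u ≤ p.1) ∧ IsBaseOf P p.2 ∧ v ≤ p.2}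
      ((hfin.prod hfin).subset (fun p hp => ⟨hp.1.1.1, hp.2.1.1⟩))
      (by
        obtain ⟨w, hw, huw⟩ := pm_exists_base_ge hfin hu
        obtain ⟨b, hb, hvb⟩ := pm_exists_base_ge hfin hv
        exact ⟨(w, b), ⟨hw, huw⟩, hb, hvb⟩)
    obtain ⟨⟨hwbase, huw⟩, hbbase, hvb⟩ := hwb
    simp only at hmin
    -- structure on T = {i | w i < b i}
    have hT : ∀ i, w i < b i → b i = v i ∧ w i = u i := by
      intro i hi
      have hbv : b i = v i := by
        by_contra hne2
        have hvi0 : v i ≤ b i := hvb i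
        have hvi : v i < b i := lt_of_le_of_ne hvi0 (Ne.symm hne2)
        obtain ⟨j, hj, hb'⟩ := hB2 b w hbbase hwbase i hi
        have hji : j ≠ i := by rintro rfl; omega
        set b' : Fin n → ℕ := b - Pi.single i 1 + Pi.single j 1 with hb'def
        have hb'app : ∀ k, b' k = b k - (Pi.single i 1 : Fin n → ℕ) k + (Pi.single j 1 : Fin n → ℕ) k := fun k => rfl
        have hb'ge : v ≤ b' := by
          intro k
          show v k ≤ b' k
          have e1 := hb'app k
          have e2 : v k ≤ b k := hvb k
          by_cases hk1 : k = i
          · subst hk1; simp [Pi.single_apply, hji] at e1; omega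
          · by_cases hk2 : k = j
            · subst hk2; simp [Pi.single_apply, hk1, hji] at e1; omega
            · simp [Pi.single_apply, hk1, hk2] at e1; omega
        have hltD : ∑ k, (w k - b' k + (b' k - w k)) < ∑ k, (w k - b k + (b k - w k)) := by
          apply Finset.sum_lt_sum
          · intro k _
            have e1 := hb'app k
            by_cases hk1 : k = i
            · subst hk1; simp [Pi.single_apply, hji] at e1; omega
            · by_cases hk2 : k = j
              · subst hk2; simp [Pi.single_apply, hk1, hji] at e1; omega
              · simp [Pi.single_apply, hk1, hk2] at e1; omega
          · refine ⟨i, Finset.mem_univ i, ?_⟩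
            have e1 := hb'app i; simp [Pi.single_apply, hji] at e1; omega
        have heq : ∑ k, (w k - b k + (b k - w k)) = ∑ k, (w k - b' k + (b' k - w k)) :=
          le_antisymm (hmin (j := (w, b')) ⟨⟨hwbase, huw⟩, hb', hb'ge⟩ (le_of_lt hltD)) (le_of_lt hltD)
        omega
      have huvi : u i < v i := lt_of_le_of_lt (huw i) (hbv ▸ hi)
      exact ⟨hbv, hC w hwbase.1 huw i huvi⟩
    -- structure on S = {j | b j < w j}
    have hS : ∀ j, b j < w j → w j = u j ∧ v j < u j := by
      intro j hj
      have hwu : w j = u j := by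
        by_contra hne2
        have huj0 : u j ≤ w j := huw j
        have huj : u j < w j := lt_of_le_of_ne huj0 (Ne.symm hne2)
        obtain ⟨k, hk, hw'⟩ := hB2 w b hwbase hbbase j hj
        have hkj : k ≠ j := by rintro rfl; omega
        set w' : Fin n → ℕ := w - Pi.single j 1 + Pi.single k 1 with hw'def
        have hw'app : ∀ m, w' m = w m - (Pi.single j 1 : Fin n → ℕ) m + (Pi.single k 1 : Fin n → ℕ) m := fun m => rfl
        have hw'ge : u ≤ w' := by
          intro m
          show u m ≤ w' m
          have e1 := hw'app m
          have e2 : u m ≤ w m := huw m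
          by_cases hm1 : m = j
          · subst hm1; simp [Pi.single_apply, hkj] at e1; omega
          · by_cases hm2 : m = k
            · subst hm2; simp [Pi.single_apply, hm1, hkj] at e1; omega
            · simp [Pi.single_apply, hm1, hm2] at e1; omega
        have hltD : ∑ m, (w' m - b m + (b m - w' m)) < ∑ m, (w m - b m + (b m - w m)) := by
          apply Finset.sum_lt_sum
          · intro m _
            have e1 := hw'app m
            by_cases hm1 : m = j
            · subst hm1; simp [Pi.single_apply, hkj] at e1; omega
            · by_cases hm2 : m = k
              · subst hm2; simp [Pi.single_apply, hm1, hkj] at e1; omega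
              · simp [Pi.single_apply, hm1, hm2] at e1; omega
          · refine ⟨j, Finset.mem_univ j, ?_⟩
            have e1 := hw'app j; simp [Pi.single_apply, hkj] at e1; omega
        have heq : ∑ m, (w m - b m + (b m - w m)) = ∑ m, (w' m - b m + (b m - w' m)) :=
          le_antisymm (hmin (j := (w', b)) ⟨⟨hw', hw'ge⟩, hbbase, hvb⟩ (le_of_lt hltD)) (le_of_lt hltD)
        omega
      have hvbj : v j ≤ b j := hvb j
      exact ⟨hwu, by omega⟩
    -- T is nonempty
    have hTne : ∃ i, w i < b i := by
      by_contra hc; push_neg at hc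
      have hbw : w = b := pm_eq_of_le_of_sum_le (fun i => hc i) (hB1 w b hwbase hbbase).le
      have hA : ∃ i, u i < v i := by
        by_contra hc2; push_neg at hc2
        have := pm_le_sum (fun i => hc2 i)
        omega
      obtain ⟨i, hAi⟩ := hA
      have h1 := hC w hwbase.1 huw i hAi
      have h2 : v i ≤ w i := by rw [hbw]; exact hvb i
      omega
    obtain ⟨i, hiT⟩ := hTne
    obtain ⟨hbv, hwu⟩ := hT i hiT
    have huwi : u i ≤ w i := huw i
    have huvi : u i < v i := by omega
    obtain ⟨j, hj, hb'base⟩ := hB2 b w hbbase hwbase i hiT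
    obtain ⟨hwju, hvju⟩ := hS j hj
    have hji : j ≠ i := by rintro rfl; omega
    set b' : Fin n → ℕ := b - Pi.single i 1 + Pi.single j 1 with hb'def
    have hb'app : ∀ k, b' k = b k - (Pi.single i 1 : Fin n → ℕ) k + (Pi.single j 1 : Fin n → ℕ) k := fun k => rfl
    set v₁ : Fin n → ℕ := v - Pi.single i 1 + Pi.single j 1 with hv₁def
    have hv₁app : ∀ k, v₁ k = v k - (Pi.single i 1 : Fin n → ℕ) k + (Pi.single j 1 : Fin n → ℕ) k := fun k => rfl
    have hv₁le : v₁ ≤ b' := by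
      intro k
      show v₁ k ≤ b' k
      have h1 := hv₁app k; have h2 := hb'app k
      have h3 : v k ≤ b k := hvb k
      by_cases hk1 : k = i
      · subst hk1; simp [Pi.single_apply, hji] at h1 h2; omega
      · by_cases hk2 : k = j
        · subst hk2; simp [Pi.single_apply, hk1, hji] at h1 h2; omega
        · simp [Pi.single_apply, hk1, hk2] at h1 h2; omega
    have hv₁mem : v₁ ∈ P := hdown b' hb'base.1 v₁ hv₁le
    have hsum₁ : ∑ k, v₁ k = ∑ k, v k := by
      have h1i : 1 ≤ v i := by omega
      have hcan : ((v - Pi.single i 1 : Fin n → ℕ) + Pi.single i 1) = v := by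
        funext k
        rcases eq_or_ne k i with rfl | hk
        · show v k - (Pi.single k 1 : Fin n → ℕ) k + (Pi.single k 1 : Fin n → ℕ) k = v k
          simp [Pi.single_apply]; omega
        · show v k - (Pi.single i 1 : Fin n → ℕ) k + (Pi.single i 1 : Fin n → ℕ) k = v k
          simp [Pi.single_apply, hk]
      have e1 : ∑ k, v₁ k = (∑ k : Fin n, (v - Pi.single i 1 : Fin n → ℕ) k) + 1 :=
        pm_sum_add_single _ j
      have e2 : (∑ k : Fin n, (v - Pi.single i 1 : Fin n → ℕ) k) + 1 = ∑ k, v k := by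
        rw [← pm_sum_add_single (v - Pi.single i 1 : Fin n → ℕ) i, hcan]
      omega
    have hΦ : ∑ k, (v₁ k - u k) < ∑ k, (v k - u k) := by
      apply Finset.sum_lt_sum
      · intro k _
        have h1 := hv₁app k
        by_cases hk1 : k = i
        · subst hk1; simp [Pi.single_apply, hji] at h1; omega
        · by_cases hk2 : k = j
          · subst hk2
            have h4 : v k < u k := hvju
            simp [Pi.single_apply, hk1, hji] at h1; omega
          · simp [Pi.single_apply, hk1, hk2] at h1; omega
      · refine ⟨i, Finset.mem_univ i, ?_⟩
        have h1 := hv₁app i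
        simp [Pi.single_apply, hji] at h1
        omega
    obtain ⟨i', hi'1, hi'2⟩ := ih u v₁ hu hv₁mem (by omega) (by omega)
    refine ⟨i', ?_, hi'2⟩
    have h1 := hv₁app i'
    by_cases hij' : i' = j
    · exfalso
      subst hij'
      simp [Pi.single_apply, hji] at h1
      omega
    · by_cases hii' : i' = i
      · subst hii'; simp [Pi.single_apply, hji] at h1; omega
      · simp [Pi.single_apply, hij', hii'] at h1; omega

/-- Theorem 2.3: characterizations of discrete polymatroids.  For a nonempty
finite downward-closed set `P ⊆ ℤ_+^n` the following are equivalent: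
(a) `P` is a discrete polymatroid;
(b) if `u, v ∈ P` with `|v| > |u|`, then there is `i` with `u + ε_i ∈ P` and
    `u + ε_i ≤ u ∨ v`;
(c) all bases of `P` have the same modulus, and the exchange property holds
    for bases: if `u, v ∈ B(P)` with `u(i) > v(i)` then there is `j` with
    `u(j) < v(j)` and `u − ε_i + ε_j ∈ B(P)`. -/
theorem discretePolymatroid_characterizations {n : ℕ} (P : Set (Fin n → ℕ))
    (hne : P.Nonempty) (hfin : P.Finite)
    (hdown : ∀ u ∈ P, ∀ v : Fin n → ℕ, v ≤ u → v ∈ P) :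
    (IsDiscretePolymatroid P ↔
      ∀ u ∈ P, ∀ v ∈ P, ∑ i, u i < ∑ i, v i →
        ∃ i, u + Pi.single i 1 ∈ P ∧ u + Pi.single i 1 ≤ u ⊔ v) ∧
    ((∀ u ∈ P, ∀ v ∈ P, ∑ i, u i < ∑ i, v i →
        ∃ i, u + Pi.single i 1 ∈ P ∧ u + Pi.single i 1 ≤ u ⊔ v) ↔
      ((∀ u v, IsBaseOf P u → IsBaseOf P v → ∑ i, u i = ∑ i, v i) ∧
        (∀ u v, IsBaseOf P u → IsBaseOf P v → ∀ i, v i < u i →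
          ∃ j, u j < v j ∧ IsBaseOf P (u - Pi.single i 1 + Pi.single j 1)))) := by
  constructor
  · constructor
    · rintro ⟨-, -, -, hex⟩ u hu v hv hlt
      obtain ⟨w, hw, huw, hwle⟩ := hex u hu v hv hlt
      rw [Pi.lt_def] at huw
      obtain ⟨hle, i, hi⟩ := huw
      have hstep : u + Pi.single i 1 ≤ w := pm_add_single_le hi hle
      exact ⟨i, hdown w hw _ hstep, hstep.trans hwle⟩
    · intro h
      refine ⟨hne, hfin, hdown, fun u hu v hv hlt => ?_⟩
      obtain ⟨i, h1, h2⟩ := h u hu v hv hlt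
      refine ⟨u + Pi.single i 1, h1, ?_, h2⟩
      rw [Pi.lt_def]
      refine ⟨pm_le_add_single u i, i, ?_⟩
      have he : (u + Pi.single i 1 : Fin n → ℕ) i = u i + 1 := by simp
      omega
  · constructor
    · intro hb
      have key : ∀ u v, IsBaseOf P u → IsBaseOf P v → ¬ (∑ i, u i < ∑ i, v i) := by
        intro u v hu hv hlt
        obtain ⟨i, h1, -⟩ := hb u hu.1 v hv.1 hlt
        have h2 := hu.2 _ h1 (pm_le_add_single u i)
        have h3 := congrFun h2 i
        simp only [Pi.add_apply, Pi.single_eq_same] at h3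
        omega
      refine ⟨fun u v hu hv => ?_, ?_⟩
      · have k1 := key u v hu hv
        have k2 := key v u hv hu
        omega
      · intro u v hu hv i hvi
        have h1i : 1 ≤ u i := by omega
        set u' : Fin n → ℕ := u - Pi.single i 1 with hu'def
        have hu'app : ∀ k, u' k = u k - (Pi.single i 1 : Fin n → ℕ) k := fun k => rfl
        have hu'le : u' ≤ u := by
          intro k
          show u' k ≤ u k
          have := hu'app k
          omega
        have hu'mem : u' ∈ P := hdown u hu.1 u' hu'le
        have hcan : u' + Pi.single i 1 = u := by
          funext k
          show u' k + (Pi.single i 1 : Fin n → ℕ) k = u k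
          have h0 := hu'app k
          by_cases hk : k = i
          · subst hk; simp [Pi.single_apply] at h0 ⊢; omega
          · simp [Pi.single_apply, hk] at h0 ⊢; omega
        have hsumu' : (∑ k, u' k) + 1 = ∑ k, u k := by
          rw [← pm_sum_add_single u' i, hcan]
        have hsameuv : ∑ k, u k = ∑ k, v k := by
          have k1 := key u v hu hv
          have k2 := key v u hv hu
          omega
        have hlt' : ∑ k, u' k < ∑ k, v k := by omega
        obtain ⟨j, hj1, hj2⟩ := hb u' hu'mem v hv.1 hlt'
        have hj2' : ∀ k, u' k + (Pi.single j 1 : Fin n → ℕ) k ≤ max (u' k) (v k) := by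
          intro k
          have h2 := hj2 k
          rw [Pi.sup_apply] at h2
          exact h2
        have hji : j ≠ i := by
          rintro rfl
          have h2 := hj2' j
          have h3 := hu'app j
          simp [Pi.single_apply] at h2 h3
          omega
        have hujv : u j < v j := by
          have h2 := hj2' j
          have h3 := hu'app j
          simp [Pi.single_apply, hji] at h2 h3
          omega
        refine ⟨j, hujv, hj1, ?_⟩
        intro z hz hlez
        obtain ⟨z', hz'base, hzz'⟩ := pm_exists_base_ge hfin hz
        have hsz : ∑ k, z' k = ∑ k, u k := by
          have k1 := key z' u hz'base hu
          have k2 := key u z' hu hz'base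
          omega
        have hsumw : ∑ k : Fin n, (u' + Pi.single j 1 : Fin n → ℕ) k = ∑ k, u k := by
          rw [pm_sum_add_single u' j]; omega
        have hle2 : ∑ k, z k ≤ ∑ k : Fin n, (u' + Pi.single j 1 : Fin n → ℕ) k := by
          have hzz := pm_le_sum hzz'
          omega
        exact pm_eq_of_le_of_sum_le hlez hle2
    · rintro ⟨hB1, hB2⟩ u hu v hv hlt
      obtain ⟨i, hi, hmem⟩ :=
        pm_aux hfin hdown hB1 hB2 (∑ k, (v k - u k)) u v hu hv hlt le_rfl
      refine ⟨i, hmem, ?_⟩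
      intro k
      show (u + Pi.single i 1 : Fin n → ℕ) k ≤ (u ⊔ v) k
      have hs : (u ⊔ v) k = max (u k) (v k) := by rw [Pi.sup_apply]
      have ha : (u + Pi.single i 1 : Fin n → ℕ) k = u k + (if k = i then 1 else 0) := by
        simp [Pi.single_apply]
      by_cases hk : k = i
      · subst hk; rw [hs, ha]; simp; omega
      · rw [hs, ha]; simp [hk]
end

section
/- Let 𝒫 ⊆ ℝ_+^n be an integral polymatroid. If u, v ∈ 𝒫 ∩ ℤ^n with |v| > |u|, then there is w ∈ 𝒫 ∩ ℤ^n such that u < w ≤ u ∨ v. -/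
/-- A (continuous) polymatroid on the ground set `[n]`: a nonempty compact
subset of `ℝ_+^n` closed under taking componentwise-smaller nonnegative
vectors (P1) and satisfying the augmentation property (P2). -/
def IsPolymatroid {n : ℕ} (P : Set (Fin n → ℝ)) : Prop :=
  P.Nonempty ∧ IsCompact P ∧ (∀ u ∈ P, ∀ i, 0 ≤ u i) ∧
    (∀ u ∈ P, ∀ v : Fin n → ℝ, (∀ i, 0 ≤ v i) → v ≤ u → v ∈ P) ∧
    (∀ u ∈ P, ∀ v ∈ P, ∑ i, u i < ∑ i, v i → ∃ w ∈ P, u < w ∧ w ≤ u ⊔ v)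

/-- A polymatroid is integral if all its extreme points (vertices) have
integer coordinates. -/
def IsIntegralPolymatroid {n : ℕ} (P : Set (Fin n → ℝ)) : Prop :=
  IsPolymatroid P ∧ ∀ x ∈ Set.extremePoints ℝ P, ∀ i, ∃ z : ℤ, x i = (z : ℝ)

namespace PolyAux

open scoped Classical

variable {n : ℕ}

lemma sum_lt_of_lt {x y : Fin n → ℝ} (h : x < y) : ∑ i, x i < ∑ i, y i := by
  obtain ⟨hle, i, hi⟩ := Pi.lt_def.mp h
  exact Finset.sum_lt_sum (fun j _ => hle j) ⟨i, Finset.mem_univ i, hi⟩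

lemma mem_down {P : Set (Fin n → ℝ)} (hP : IsPolymatroid P) {a b : Fin n → ℝ}
    (ha : a ∈ P) (hb0 : ∀ j, 0 ≤ b j) (hba : b ≤ a) : b ∈ P :=
  hP.2.2.2.1 a ha b hb0 hba

lemma isClosed_box (q c : Fin n → ℝ) : IsClosed {x : Fin n → ℝ | q ≤ x ∧ x ≤ c} := by
  have h1 : IsClosed {x : Fin n → ℝ | q ≤ x} := by
    have : {x : Fin n → ℝ | q ≤ x} = ⋂ j, {x | q j ≤ x j} := by
      ext x; simp [Pi.le_def, Set.mem_iInter]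
    rw [this]
    exact isClosed_iInter fun j => isClosed_le continuous_const (continuous_apply j)
  have h2 : IsClosed {x : Fin n → ℝ | x ≤ c} := by
    have : {x : Fin n → ℝ | x ≤ c} = ⋂ j, {x | x j ≤ c j} := by
      ext x; simp [Pi.le_def, Set.mem_iInter]
    rw [this]
    exact isClosed_iInter fun j => isClosed_le (continuous_apply j) continuous_const
  exact (h1.inter h2)

lemma exists_sum_max {K : Set (Fin n → ℝ)} (hK : IsCompact K) (hne : K.Nonempty) :
    ∃ b ∈ K, ∀ x ∈ K, ∑ i, x i ≤ ∑ i, b i := by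
  obtain ⟨b, hb, hmax⟩ := hK.exists_isMaxOn hne
    ((continuous_finset_sum Finset.univ fun i _ => continuous_apply i).continuousOn)
  exact ⟨b, hb, fun x hx => hmax hx⟩

lemma lemK {P : Set (Fin n → ℝ)} (hP : IsPolymatroid P) {y : Fin n → ℝ} (hy : y ∈ P)
    {i k : Fin n} (hik : i ≠ k)
    (hbl : ∀ δ > 0, Function.update y i (y i + δ) ∉ P)
    {ε : ℝ} (hε : 0 < ε) (hp : Function.update y k (y k + ε) ∈ P)
    {δ : ℝ} (hδ : 0 < δ) (hδε : δ ≤ ε) :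
    (fun j => if j = i then y i + δ else if j = k then 0 else y j) ∉ P := by
  intro hq
  set p := Function.update y k (y k + ε) with hpdef
  set q : Fin n → ℝ := fun j => if j = i then y i + δ else if j = k then 0 else y j with hqdef
  have hqapp : ∀ j, q j = if j = i then y i + δ else if j = k then 0 else y j := fun j => rfl
  have hynn : ∀ j, 0 ≤ y j := hP.2.2.1 y hy
  set W := P ∩ {x | q ≤ x ∧ x ≤ q ⊔ p} with hWdef
  have hWc : IsCompact W := hP.2.1.inter_right (isClosed_box q (q ⊔ p))
  have hWne : W.Nonempty := ⟨q, hq, le_refl q, le_sup_left⟩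
  obtain ⟨b, ⟨hbP, hbq, hbtop⟩, hbmax⟩ := exists_sum_max hWc hWne
  have hpapp : ∀ j, p j = if j = k then y k + ε else y j := by
    intro j; by_cases hj : j = k <;> simp [hpdef, hj, Function.update]
  have htop : ∀ j, (q ⊔ p) j = if j = i then y i + δ else if j = k then y k + ε else y j := by
    intro j
    rw [Pi.sup_apply, hqapp j, hpapp j]
    by_cases hji : j = i
    · have hjk : j ≠ k := by rw [hji]; exact hik
      rw [if_pos hji, if_pos hji, if_neg hjk, hji]
      exact sup_eq_left.mpr (by linarith)
    · rw [if_neg hji, if_neg hji]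
      by_cases hjk : j = k
      · rw [if_pos hjk, if_pos hjk]
        exact sup_eq_right.mpr (by have := hynn k; linarith)
      · rw [if_neg hjk, if_neg hjk]; exact sup_idem _
  have hsp : ∑ j, p j = ∑ j, y j + ε := by
    have h : ∀ j ∈ Finset.univ, p j = y j + (if j = k then ε else 0) := by
      intro j _; by_cases hj : j = k <;> simp [hpapp, hj]
    rw [Finset.sum_congr rfl h, Finset.sum_add_distrib, Finset.sum_ite_eq' Finset.univ k]
    simp
  have hsb : ∑ j, p j ≤ ∑ j, b j := by
    by_contra hcon
    push_neg at hcon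
    obtain ⟨w, hwP, hbw, hwtop⟩ := hP.2.2.2.2 b hbP p hp hcon
    have hwW : w ∈ W := ⟨hwP, le_trans hbq hbw.le,
      le_trans hwtop (sup_le hbtop le_sup_right)⟩
    exact absurd (hbmax w hwW) (not_le.mpr (sum_lt_of_lt hbw))
  have hbi : b i = y i + δ := by
    have h1 := hbq i
    have h2 := hbtop i
    rw [hqapp i, if_pos rfl] at h1
    rw [htop i, if_pos rfl] at h2
    linarith
  have hbj : ∀ j, j ≠ i → j ≠ k → b j = y j := by
    intro j hji hjk
    have h1 := hbq j
    have h2 := hbtop j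
    rw [hqapp j, if_neg hji, if_neg hjk] at h1
    rw [htop j, if_neg hji, if_neg hjk] at h2
    linarith
  have hsdec : ∑ j, b j = ∑ j, y j + δ + (b k - y k) := by
    have h : ∀ j ∈ Finset.univ,
        b j = y j + ((if j = i then δ else 0) + (if j = k then b k - y k else 0)) := by
      intro j _
      by_cases hji : j = i
      · have hjk : j ≠ k := by rw [hji]; exact hik
        rw [hji, if_pos rfl, if_neg hik, hbi]; ring
      · by_cases hjk : j = k
        · rw [hjk, if_neg (by rw [← hjk]; exact fun hcon => hji hcon), if_pos rfl]; ring
        · rw [if_neg hji, if_neg hjk, hbj j hji hjk]; ring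
    rw [Finset.sum_congr rfl h, Finset.sum_add_distrib, Finset.sum_add_distrib,
      Finset.sum_ite_eq' Finset.univ i, Finset.sum_ite_eq' Finset.univ k]
    simp; ring
  have hbk : y k ≤ b k := by
    rw [hsp, hsdec] at hsb
    linarith
  have hfin : Function.update y i (y i + δ) ∈ P := by
    apply mem_down hP hbP
    · intro j
      by_cases hj : j = i
      · rw [hj, Function.update_self]; have := hynn i; linarith
      · rw [Function.update_of_ne hj]; exact hynn j
    · intro j
      by_cases hji : j = i
      · rw [hji, Function.update_self, ← hbi]
      · rw [Function.update_of_ne hji]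
        by_cases hjk : j = k
        · rw [hjk]; exact hbk
        · rw [← hbj j hji hjk]
  exact hbl δ hδ hfin

/-- Claim L: at a blocked direction there is a tight set. -/
lemma claimL : ∀ m : ℕ, ∀ P : Set (Fin n → ℝ), IsPolymatroid P → ∀ y, y ∈ P → ∀ i : Fin n,
    (∀ δ > 0, Function.update y i (y i + δ) ∉ P) →
    (Finset.univ.filter fun k => ∃ δ > 0, Function.update y k (y k + δ) ∈ P).card = m →
    ∃ A : Finset (Fin n), i ∈ A ∧ ∀ z ∈ P, ∑ j ∈ A, z j ≤ ∑ j ∈ A, y j := by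
  intro m
  induction m using Nat.strong_induction_on with
  | _ m IH =>
  intro P hP y hy i hbl hcard
  set U := (Finset.univ.filter fun k => ∃ δ > 0, Function.update y k (y k + δ) ∈ P) with hUdef
  have hynn : ∀ j, 0 ≤ y j := hP.2.2.1 y hy
  by_cases hU : U = ∅
  · -- every direction blocked: the full set is tight
    refine ⟨Finset.univ, Finset.mem_univ i, ?_⟩
    intro z hz
    by_contra hcon
    push_neg at hcon
    obtain ⟨w, hwP, hyw, _⟩ := hP.2.2.2.2 y hy z hz hcon
    obtain ⟨hle, j, hj⟩ := Pi.lt_def.mp hyw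
    have hwnn := hP.2.2.1 w hwP
    have hmem : Function.update y j (y j + (w j - y j)) ∈ P := by
      apply mem_down hP hwP
      · intro l
        by_cases hl : l = j
        · rw [hl, Function.update_self]; linarith [hynn j, hj]
        · rw [Function.update_of_ne hl]; exact hynn l
      · intro l
        by_cases hl : l = j
        · rw [hl, Function.update_self]; linarith
        · rw [Function.update_of_ne hl]; exact hle l
    have hjU : j ∈ U := by
      rw [hUdef, Finset.mem_filter]
      exact ⟨Finset.mem_univ j, ⟨w j - y j, by linarith, hmem⟩⟩
    rw [hU] at hjU
    exact absurd hjU (Finset.notMem_empty j)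
  · -- some direction k is open
    obtain ⟨k, hkU⟩ := Finset.nonempty_of_ne_empty hU
    obtain ⟨ε, hε, hkP⟩ := (Finset.mem_filter.mp hkU).2
    have hik : i ≠ k := by
      rintro rfl
      exact hbl ε hε hkP
    -- the smaller polymatroid P₂
    set P₂ := P ∩ {x | x k = 0} with hP₂def
    have hP₂ : IsPolymatroid P₂ := by
      refine ⟨⟨0, ?_, rfl⟩, hP.2.1.inter_right (isClosed_eq (continuous_apply k) continuous_const),
        fun u hu j => hP.2.2.1 u hu.1 j, ?_, ?_⟩
      · exact mem_down hP hy (fun j => le_refl 0) hynn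
      · intro a ha b hb0 hba
        refine ⟨mem_down hP ha.1 hb0 hba, le_antisymm (ha.2 ▸ hba k) (hb0 k)⟩
      · intro a ha b hb hab
        obtain ⟨w, hwP, haw, hwtop⟩ := hP.2.2.2.2 a ha.1 b hb.1 hab
        refine ⟨w, ⟨hwP, le_antisymm ?_ (hP.2.2.1 w hwP k)⟩, haw, hwtop⟩
        have := hwtop k
        rw [Pi.sup_apply] at this
        rw [ha.2, hb.2] at this
        simpa using this
    set y₂ := Function.update y k 0 with hy₂def
    have hy₂nn : ∀ j, 0 ≤ y₂ j := by
      intro j; by_cases hj : j = k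
      · rw [hj, hy₂def, Function.update_self]
      · rw [hy₂def, Function.update_of_ne hj]; exact hynn j
    have hy₂le : y₂ ≤ y := by
      intro j; by_cases hj : j = k
      · rw [hj, hy₂def, Function.update_self]; exact hynn k
      · rw [hy₂def, Function.update_of_ne hj]
    have hy₂P : y₂ ∈ P₂ := ⟨mem_down hP hy hy₂nn hy₂le, by rw [hy₂def]; exact Function.update_self ..⟩
    have hy₂i : y₂ i = y i := by rw [hy₂def, Function.update_of_ne hik]
    -- i is blocked at y₂ in P₂
    have hbl₂ : ∀ δ > 0, Function.update y₂ i (y₂ i + δ) ∉ P₂ := by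
      intro δ hδ hmem
      have hδ' : 0 < min δ ε := lt_min hδ hε
      apply lemK hP hy hik hbl hε hkP hδ' (min_le_right δ ε)
      apply mem_down hP hmem.1
      · intro l
        by_cases hli : l = i
        · rw [hli, if_pos rfl]; have := hynn i; have := le_min hδ.le hε.le; linarith [lt_min hδ hε]
        · rw [if_neg hli]
          by_cases hlk : l = k
          · rw [if_pos hlk]
          · rw [if_neg hlk]; exact hynn l
      · intro l
        dsimp only
        by_cases hli : l = i
        · rw [hli, if_pos rfl, Function.update_self, hy₂i]
          have := min_le_left δ ε; linarith
        · rw [if_neg hli, Function.update_of_ne hli]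
          by_cases hlk : l = k
          · rw [if_pos hlk, hlk, hy₂def, Function.update_self]
          · rw [if_neg hlk, hy₂def, Function.update_of_ne hlk]
    -- the open set of P₂ at y₂ is smaller
    set U₂ := (Finset.univ.filter fun j => ∃ δ > 0, Function.update y₂ j (y₂ j + δ) ∈ P₂) with hU₂def
    have hU₂sub : U₂ ⊆ U.erase k := by
      intro j hj
      obtain ⟨δ, hδ, hmem⟩ := (Finset.mem_filter.mp hj).2
      have hjk : j ≠ k := by
        rintro rfl
        have h0 : Function.update y₂ j (y₂ j + δ) j = 0 := hmem.2
        rw [Function.update_self] at h0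
        have := hy₂nn j
        linarith
      rw [Finset.mem_erase]
      refine ⟨hjk, ?_⟩
      rw [hUdef, Finset.mem_filter]
      refine ⟨Finset.mem_univ j, ?_⟩
      by_contra hnj
      push_neg at hnj
      have hblj : ∀ δ > 0, Function.update y j (y j + δ) ∉ P := by
        intro δ' hδ' hmem'
        exact absurd hmem' (by
          have := hnj δ'
          intro hcc
          exact (this hδ') hcc)
      have hδ' : 0 < min δ ε := lt_min hδ hε
      apply lemK hP hy hjk hblj hε hkP hδ' (min_le_right δ ε)
      apply mem_down hP hmem.1
      · intro l
        by_cases hli : l = j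
        · rw [hli, if_pos rfl]; have := hynn j; linarith [lt_min hδ hε]
        · rw [if_neg hli]
          by_cases hlk : l = k
          · rw [if_pos hlk]
          · rw [if_neg hlk]; exact hynn l
      · intro l
        dsimp only
        by_cases hli : l = j
        · rw [hli, if_pos rfl, Function.update_self, hy₂def, Function.update_of_ne hjk]
          have := min_le_left δ ε; linarith
        · rw [if_neg hli, Function.update_of_ne hli]
          by_cases hlk : l = k
          · rw [if_pos hlk, hlk, hy₂def, Function.update_self]
          · rw [if_neg hlk, hy₂def, Function.update_of_ne hlk]
    have hcard₂ : U₂.card < m := by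
      calc U₂.card ≤ (U.erase k).card := Finset.card_le_card hU₂sub
        _ < U.card := Finset.card_erase_lt_of_mem hkU
        _ = m := hcard
    obtain ⟨A', hiA', htight⟩ := IH U₂.card hcard₂ P₂ hP₂ y₂ hy₂P i hbl₂ rfl
    set A := A'.erase k with hAdef
    have hAsub : A ⊆ A' := Finset.erase_subset k A'
    refine ⟨A, Finset.mem_erase.mpr ⟨hik, hiA'⟩, ?_⟩
    intro z hz
    set z₁ : Fin n → ℝ := fun j => if j ∈ A then z j else 0 with hz₁def
    have hznn := hP.2.2.1 z hz
    have hz₁P : z₁ ∈ P₂ := by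
      constructor
      · apply mem_down hP hz
        · intro j; by_cases hj : j ∈ A
          · rw [hz₁def]; simp only [if_pos hj]; exact hznn j
          · rw [hz₁def]; simp only [if_neg hj]; exact le_refl 0
        · intro j; by_cases hj : j ∈ A
          · rw [hz₁def]; simp only [if_pos hj]; exact le_refl (z j)
          · rw [hz₁def]; simp only [if_neg hj]; exact hznn j
      · show z₁ k = 0
        rw [hz₁def]
        exact if_neg (fun hc : k ∈ A => (Finset.mem_erase.mp hc).1 rfl)
    have h1 := htight z₁ hz₁P
    have hLHS : ∑ j ∈ A', z₁ j = ∑ j ∈ A, z j := by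
      rw [hz₁def]
      rw [Finset.sum_ite_mem]
      congr 1
      exact Finset.inter_eq_right.mpr hAsub
    have hRHS : ∑ j ∈ A', y₂ j = ∑ j ∈ A, y j := by
      have : ∀ j ∈ A', y₂ j = if j ∈ A then y j else 0 := by
        intro j hj
        by_cases hjk : j = k
        · rw [if_neg (fun hc => (Finset.mem_erase.mp hc).1 hjk), hjk, hy₂def, Function.update_self]
        · rw [if_pos (Finset.mem_erase.mpr ⟨hjk, hj⟩), hy₂def, Function.update_of_ne hjk]
      rw [Finset.sum_congr rfl this, Finset.sum_ite_mem]
      congr 1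
      exact Finset.inter_eq_right.mpr hAsub
    rw [hLHS, hRHS] at h1
    exact h1

lemma exists_extreme_max {P : Set (Fin n → ℝ)} (hne : P.Nonempty) (hcomp : IsCompact P)
    (A : Finset (Fin n)) :
    ∃ x ∈ Set.extremePoints ℝ P, ∀ z ∈ P, ∑ j ∈ A, z j ≤ ∑ j ∈ A, x j := by
  have hcontL : Continuous (fun x : Fin n → ℝ => ∑ j ∈ A, x j) :=
    continuous_finset_sum A fun i _ => continuous_apply i
  obtain ⟨x₀, hx₀P, hx₀max⟩ := hcomp.exists_isMaxOn hne hcontL.continuousOn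
  set M := P ∩ {x | ∀ z ∈ P, ∑ j ∈ A, z j ≤ ∑ j ∈ A, x j} with hMdef
  have hMc : IsCompact M := hcomp.inter_right (by
    have h : {x : Fin n → ℝ | ∀ z ∈ P, ∑ j ∈ A, z j ≤ ∑ j ∈ A, x j}
        = ⋂ z ∈ P, {x | ∑ j ∈ A, z j ≤ ∑ j ∈ A, x j} := by
      ext x; simp
    rw [h]
    exact isClosed_biInter fun z _ => isClosed_le continuous_const hcontL)
  have hMne : M.Nonempty := ⟨x₀, hx₀P, fun z hz => hx₀max hz⟩
  have hcontQ : Continuous (fun x : Fin n → ℝ => ∑ j, (x j)^2) :=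
    continuous_finset_sum Finset.univ fun i _ => (continuous_apply i).pow 2
  obtain ⟨x, ⟨hxP, hxmax⟩, hxQ⟩ := hMc.exists_isMaxOn hMne hcontQ.continuousOn
  refine ⟨x, ⟨hxP, ?_⟩, hxmax⟩
  rintro x₁ hx₁ x₂ hx₂ ⟨a, b, ha, hb, hab, hsum⟩
  have happ : ∀ j, x j = a * x₁ j + b * x₂ j := by
    intro j; rw [← hsum]; simp [smul_eq_mul]
  have hL : ∑ j ∈ A, x j = a * ∑ j ∈ A, x₁ j + b * ∑ j ∈ A, x₂ j := by
    rw [Finset.mul_sum, Finset.mul_sum, ← Finset.sum_add_distrib]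
    exact Finset.sum_congr rfl fun j _ => happ j
  have h1 : ∑ j ∈ A, x₁ j ≤ ∑ j ∈ A, x j := hxmax x₁ hx₁
  have h2 : ∑ j ∈ A, x₂ j ≤ ∑ j ∈ A, x j := hxmax x₂ hx₂
  have hS : a * ∑ j ∈ A, x j + b * ∑ j ∈ A, x j = ∑ j ∈ A, x j := by
    rw [← add_mul, hab, one_mul]
  have heq1 : ∑ j ∈ A, x₁ j = ∑ j ∈ A, x j := by
    by_contra h
    have hlt := lt_of_le_of_ne h1 h
    have e1 := mul_lt_mul_of_pos_left hlt ha
    have e2 := mul_le_mul_of_nonneg_left h2 hb.le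
    linarith
  have heq2 : ∑ j ∈ A, x₂ j = ∑ j ∈ A, x j := by
    by_contra h
    have hlt := lt_of_le_of_ne h2 h
    have e1 := mul_lt_mul_of_pos_left hlt hb
    have e2 := mul_le_mul_of_nonneg_left h1 ha.le
    linarith
  have hx₁M : x₁ ∈ M := ⟨hx₁, fun z hz => heq1 ▸ hxmax z hz⟩
  have hx₂M : x₂ ∈ M := ⟨hx₂, fun z hz => heq2 ▸ hxmax z hz⟩
  have hb' : b = 1 - a := by linarith
  have hpt : ∀ j, (x j)^2 = a*(x₁ j)^2 + b*(x₂ j)^2 - a*b*(x₁ j - x₂ j)^2 := by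
    intro j; rw [happ j, hb']; ring
  have hQx : ∑ j, (x j)^2
      = a * ∑ j, (x₁ j)^2 + b * ∑ j, (x₂ j)^2 - a*b*∑ j, (x₁ j - x₂ j)^2 := by
    have h0 : ∑ j, (x j)^2 = ∑ j, (a*(x₁ j)^2 + b*(x₂ j)^2 - a*b*(x₁ j - x₂ j)^2) :=
      Finset.sum_congr rfl fun j _ => hpt j
    rw [h0, Finset.sum_sub_distrib, Finset.sum_add_distrib, Finset.mul_sum, Finset.mul_sum,
      Finset.mul_sum]
  have hQ1 : ∑ j, (x₁ j)^2 ≤ ∑ j, (x j)^2 := hxQ hx₁M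
  have hQ2 : ∑ j, (x₂ j)^2 ≤ ∑ j, (x j)^2 := hxQ hx₂M
  have hQSnn : (0:ℝ) ≤ ∑ j, (x₁ j - x₂ j)^2 := Finset.sum_nonneg fun j _ => sq_nonneg _
  have habpos : 0 < a * b := mul_pos ha hb
  have hQD : ∑ j, (x₁ j - x₂ j)^2 ≤ 0 := by
    have e1 := mul_le_mul_of_nonneg_left hQ1 ha.le
    have e2 := mul_le_mul_of_nonneg_left hQ2 hb.le
    have hS2 : a * ∑ j, (x j)^2 + b * ∑ j, (x j)^2 = ∑ j, (x j)^2 := by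
      rw [← add_mul, hab, one_mul]
    nlinarith
  have hQD0 : ∀ j ∈ Finset.univ, (x₁ j - x₂ j)^2 = 0 := by
    rw [← Finset.sum_eq_zero_iff_of_nonneg (fun j _ => sq_nonneg _)]
    have : (0:ℝ) ≤ ∑ j, (x₁ j - x₂ j)^2 := Finset.sum_nonneg fun j _ => sq_nonneg _
    linarith
  have hx12 : x₁ = x₂ := by
    funext j
    have := hQD0 j (Finset.mem_univ j)
    have := sq_eq_zero_iff.mp this
    linarith
  have hx1x : x₁ = x := by
    funext j
    rw [happ j, ← hx12, ← add_mul, hab, one_mul]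
  exact hx1x

lemma blocked_at_u {P : Set (Fin n → ℝ)} (hP : IsPolymatroid P)
    (hInt : ∀ x ∈ Set.extremePoints ℝ P, ∀ i, ∃ z : ℤ, x i = (z : ℝ))
    {u : Fin n → ℝ} (hu : u ∈ P) (huz : ∀ i, ∃ z : ℤ, u i = (z : ℝ)) {i : Fin n}
    (h1 : Function.update u i (u i + 1) ∉ P) :
    ∀ δ > 0, Function.update u i (u i + δ) ∉ P := by
  by_contra hcon
  push_neg at hcon
  obtain ⟨δ₀, hδ₀, hδ₀P⟩ := hcon
  set T := {t : ℝ | 0 ≤ t ∧ Function.update u i (u i + t) ∈ P} with hTdef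
  have hTne : T.Nonempty := ⟨δ₀, hδ₀.le, hδ₀P⟩
  have hmap : Continuous fun t : ℝ => Function.update u i (u i + t) := by
    apply continuous_pi
    intro j
    by_cases hj : j = i
    · subst hj
      simp only [Function.update_self]
      exact continuous_const.add continuous_id
    · simp only [Function.update_of_ne hj]
      exact continuous_const
  have hTclosed : IsClosed T := by
    have : T = {t : ℝ | 0 ≤ t} ∩ (fun t : ℝ => Function.update u i (u i + t)) ⁻¹' P := rfl
    rw [this]
    exact (isClosed_le continuous_const continuous_id).inter (hP.2.1.isClosed.preimage hmap)
  -- bound T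
  obtain ⟨bS, hbSP, hbSmax⟩ := exists_sum_max hP.2.1 hP.1
  have hTbd : ∀ t ∈ T, t ≤ ∑ j, bS j - ∑ j, u j + 1 := by
    intro t ht
    obtain ⟨ht0, htP⟩ := ht
    have hpt : ∑ j, Function.update u i (u i + t) j = ∑ j, u j + t := by
      have h : ∀ j ∈ Finset.univ, Function.update u i (u i + t) j
          = u j + (if j = i then t else 0) := by
        intro j _
        by_cases hj : j = i
        · subst hj; rw [Function.update_self, if_pos rfl]
        · rw [Function.update_of_ne hj, if_neg hj]; ring
      rw [Finset.sum_congr rfl h, Finset.sum_add_distrib, Finset.sum_ite_eq' Finset.univ i]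
      simp
    have := hbSmax _ htP
    rw [hpt] at this
    linarith
  have hTcomp : IsCompact T := by
    apply IsCompact.of_isClosed_subset (isCompact_Icc (a := (0:ℝ)) (b := ∑ j, bS j - ∑ j, u j + 1))
      hTclosed
    intro t ht
    exact Set.mem_Icc.mpr ⟨ht.1, hTbd t ht⟩
  obtain ⟨Tm, hTmT, hTmub⟩ := hTcomp.exists_isGreatest hTne
  have hTm0 : 0 < Tm := lt_of_lt_of_le hδ₀ (hTmub ⟨hδ₀.le, hδ₀P⟩)
  set y := Function.update u i (u i + Tm) with hydef
  have hy : y ∈ P := hTmT.2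
  have hyi : y i = u i + Tm := Function.update_self ..
  have hbly : ∀ δ > 0, Function.update y i (y i + δ) ∉ P := by
    intro δ hδ hmem
    have heq : Function.update y i (y i + δ) = Function.update u i (u i + (Tm + δ)) := by
      rw [hydef, Function.update_idem, Function.update_self, add_assoc]
    rw [heq] at hmem
    have : Tm + δ ∈ T := ⟨by linarith [hTmT.1], hmem⟩
    have := hTmub this
    linarith
  obtain ⟨A, hiA, htight⟩ := claimL _ P hP y hy i hbly rfl
  obtain ⟨xe, hxeext, hxemax⟩ := exists_extreme_max hP.1 hP.2.1 A
  have hxeP : xe ∈ P := hxeext.1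
  -- the two sums agree
  have hyA : ∑ j ∈ A, y j = ∑ j ∈ A, u j + Tm := by
    have h : ∀ j ∈ A, y j = u j + (if j = i then Tm else 0) := by
      intro j _
      by_cases hj : j = i
      · subst hj; rw [hyi, if_pos rfl]
      · rw [hydef, Function.update_of_ne hj, if_neg hj]; ring
    rw [Finset.sum_congr rfl h, Finset.sum_add_distrib, Finset.sum_ite_eq' A i, if_pos hiA]
  have e1 : ∑ j ∈ A, xe j ≤ ∑ j ∈ A, y j := htight xe hxeP
  have e2 : ∑ j ∈ A, y j ≤ ∑ j ∈ A, xe j := hxemax y hy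
  -- integrality
  have hZx : ∃ Z : ℤ, (Z : ℝ) = ∑ j ∈ A, xe j := by
    choose f hf using hInt xe hxeext
    exact ⟨∑ j ∈ A, f j, by push_cast; exact Finset.sum_congr rfl fun j _ => (hf j).symm⟩
  have hZu : ∃ Z : ℤ, (Z : ℝ) = ∑ j ∈ A, u j := by
    choose f hf using huz
    exact ⟨∑ j ∈ A, f j, by push_cast; exact Finset.sum_congr rfl fun j _ => (hf j).symm⟩
  obtain ⟨Zx, hZx⟩ := hZx
  obtain ⟨Zu, hZu⟩ := hZu
  have hTmeq : Tm = ((Zx - Zu : ℤ) : ℝ) := by push_cast; linarith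
  have hTm1 : Tm < 1 := by
    by_contra hge
    push_neg at hge
    apply h1
    apply mem_down hP hy
    · intro j
      by_cases hj : j = i
      · subst hj; rw [Function.update_self]
        have := hP.2.2.1 u hu j; linarith
      · rw [Function.update_of_ne hj]; exact hP.2.2.1 u hu j
    · intro j
      by_cases hj : j = i
      · subst hj; rw [Function.update_self, hydef, Function.update_self]; linarith
      · rw [Function.update_of_ne hj, hydef, Function.update_of_ne hj]
  rw [hTmeq] at hTm0 hTm1
  have h0 : (0 : ℤ) < Zx - Zu := by exact_mod_cast hTm0
  have h1' : (Zx - Zu : ℤ) < 1 := by exact_mod_cast hTm1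
  omega

lemma tightUnion {P : Set (Fin n → ℝ)} (hP : IsPolymatroid P) {u : Fin n → ℝ} (hu : u ∈ P) :
    ∀ B : Finset (Fin n), (∀ k ∈ B, ∀ δ > 0, Function.update u k (u k + δ) ∉ P) →
    ∀ w ∈ P, (∀ j, j ∉ B → w j ≤ u j) → ∑ j, w j ≤ ∑ j, u j := by
  intro B
  induction B using Finset.induction_on with
  | empty =>
    intro _ w hwP hwle
    exact Finset.sum_le_sum fun j _ => hwle j (Finset.notMem_empty j)
  | @insert k B' hkB' IH =>
    intro hbl w hwP hwle
    have hunn := hP.2.2.1 u hu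
    set W := P ∩ {x | u ≤ x ∧ x ≤ u ⊔ w} with hWdef
    have hWc : IsCompact W := hP.2.1.inter_right (isClosed_box u (u ⊔ w))
    have hWne : W.Nonempty := ⟨u, hu, le_refl u, le_sup_left⟩
    obtain ⟨b, ⟨hbP, hub, htopb⟩, hbmax⟩ := exists_sum_max hWc hWne
    have hsbw : ∑ j, w j ≤ ∑ j, b j := by
      by_contra hconw
      push_neg at hconw
      obtain ⟨x, hxP, hbx, hxtop⟩ := hP.2.2.2.2 b hbP w hwP hconw
      have hxW : x ∈ W := ⟨hxP, le_trans hub hbx.le, le_trans hxtop (sup_le htopb le_sup_right)⟩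
      exact absurd (hbmax x hxW) (not_le.mpr (sum_lt_of_lt hbx))
    have hboff : ∀ j, j ∉ insert k B' → b j = u j := by
      intro j hj
      have h2 := htopb j
      rw [Pi.sup_apply] at h2
      have : w j ≤ u j := hwle j hj
      have : b j ≤ u j := le_trans h2 (by exact sup_le (le_refl _) this)
      exact le_antisymm this (hub j)
    set a₁ := Function.update b k (u k) with ha₁def
    have ha₁P : a₁ ∈ P := by
      apply mem_down hP hbP
      · intro j
        rw [ha₁def]
        by_cases hj : j = k
        · subst hj; rw [Function.update_self]; exact hunn j
        · rw [Function.update_of_ne hj]; exact hP.2.2.1 b hbP j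
      · intro j
        rw [ha₁def]
        by_cases hj : j = k
        · subst hj; rw [Function.update_self]; exact hub j
        · rw [Function.update_of_ne hj]
    have hs1 : ∑ j, a₁ j ≤ ∑ j, u j := by
      apply IH (fun k' hk' => hbl k' (Finset.mem_insert_of_mem hk')) a₁ ha₁P
      intro j hj
      rw [ha₁def]
      by_cases hjk : j = k
      · subst hjk; rw [Function.update_self]
      · rw [Function.update_of_ne hjk]
        rw [hboff j (by simp [hjk, hj])]
    set a₂ : Fin n → ℝ := fun j => if j ∈ B' then u j else b j with ha₂def
    have ha₂ge : u ≤ a₂ := by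
      intro j
      by_cases hj : j ∈ B'
      · simp only [ha₂def, if_pos hj]; exact le_refl _
      · simp only [ha₂def, if_neg hj]; exact hub j
    have ha₂P : a₂ ∈ P := by
      apply mem_down hP hbP
      · intro j; exact le_trans (hunn j) (ha₂ge j)
      · intro j
        by_cases hj : j ∈ B'
        · simp only [ha₂def, if_pos hj]; exact hub j
        · simp only [ha₂def, if_neg hj]; exact le_refl _
    have ha₂off : ∀ j, j ≠ k → a₂ j = u j := by
      intro j hj
      by_cases hjB : j ∈ B'
      · simp only [ha₂def, if_pos hjB]
      · simp only [ha₂def, if_neg hjB]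
        exact hboff j (by simp [hj, hjB])
    have hs2 : ∑ j, a₂ j ≤ ∑ j, u j := by
      by_contra hcon2
      push_neg at hcon2
      obtain ⟨x, hxP, hux, hxtop⟩ := hP.2.2.2.2 u hu a₂ ha₂P hcon2
      have hxa₂ : x ≤ a₂ := le_trans hxtop (sup_le ha₂ge (le_refl _))
      obtain ⟨hle, j0, hj0⟩ := Pi.lt_def.mp hux
      have hj0k : j0 = k := by
        by_contra hne
        have := hxa₂ j0
        rw [ha₂off j0 hne] at this
        linarith
      apply hbl k (Finset.mem_insert_self k B') (x k - u k) (by rw [← hj0k]; linarith)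
      apply mem_down hP hxP
      · intro j
        by_cases hj : j = k
        · subst hj; rw [Function.update_self]
          have := hunn j; have := hle j; linarith
        · rw [Function.update_of_ne hj]; exact hunn j
      · intro j
        by_cases hj : j = k
        · subst hj; rw [Function.update_self]; linarith
        · rw [Function.update_of_ne hj]; exact hle j
    have hsid : ∀ j ∈ Finset.univ, a₁ j + a₂ j = b j + u j := by
      intro j _
      rw [ha₁def]
      by_cases hjk : j = k
      · subst hjk
        rw [Function.update_self]
        simp only [ha₂def, if_neg hkB']
        ring
      · rw [Function.update_of_ne hjk]
        by_cases hjB : j ∈ B'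
        · simp only [ha₂def, if_pos hjB]
        · simp only [ha₂def, if_neg hjB]
          rw [hboff j (by simp [hjk, hjB])]
    have hsum : ∑ j, a₁ j + ∑ j, a₂ j = ∑ j, b j + ∑ j, u j := by
      rw [← Finset.sum_add_distrib, ← Finset.sum_add_distrib]
      exact Finset.sum_congr rfl hsid
    linarith

end PolyAux

open PolyAux in
/-- Lemma 3.1: if `𝒫 ⊆ ℝ_+^n` is an integral polymatroid and
`u, v ∈ 𝒫 ∩ ℤ^n` with `|v| > |u|`, then there is `w ∈ 𝒫 ∩ ℤ^n` with
`u < w ≤ u ∨ v`. -/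
theorem integralPolymatroid_integer_augmentation {n : ℕ}
    (P : Set (Fin n → ℝ)) (hP : IsIntegralPolymatroid P)
    (u v : Fin n → ℝ) (hu : u ∈ P) (hv : v ∈ P)
    (huz : ∀ i, ∃ z : ℤ, u i = (z : ℝ)) (hvz : ∀ i, ∃ z : ℤ, v i = (z : ℝ))
    (hlt : ∑ i, u i < ∑ i, v i) :
    ∃ w ∈ P, (∀ i, ∃ z : ℤ, w i = (z : ℝ)) ∧ u < w ∧ w ≤ u ⊔ v := by
  classical
  obtain ⟨hPoly, hInt⟩ := hP
  by_cases hcase : ∃ i, u i < v i ∧ Function.update u i (u i + 1) ∈ P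
  · obtain ⟨i, hiv, hiP⟩ := hcase
    refine ⟨Function.update u i (u i + 1), hiP, ?_, ?_, ?_⟩
    · intro j
      by_cases hj : j = i
      · subst hj
        obtain ⟨z, hz⟩ := huz j
        exact ⟨z + 1, by rw [Function.update_self, hz]; push_cast; ring⟩
      · rw [Function.update_of_ne hj]; exact huz j
    · rw [Pi.lt_def]
      constructor
      · intro j
        by_cases hj : j = i
        · subst hj; rw [Function.update_self]; linarith
        · rw [Function.update_of_ne hj]
      · exact ⟨i, by rw [Function.update_self]; linarith⟩
    · intro j
      rw [Pi.sup_apply]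
      by_cases hj : j = i
      · subst hj
        rw [Function.update_self]
        obtain ⟨zu, hzu⟩ := huz j
        obtain ⟨zv, hzv⟩ := hvz j
        have hz : zu < zv := by
          rw [hzu, hzv] at hiv
          exact_mod_cast hiv
        have : u j + 1 ≤ v j := by
          rw [hzu, hzv]
          have : zu + 1 ≤ zv := hz
          exact_mod_cast this
        exact le_trans this le_sup_right
      · rw [Function.update_of_ne hj]; exact le_sup_left
  · push_neg at hcase
    exfalso
    set B := Finset.univ.filter (fun i => u i < v i) with hBdef
    have hblB : ∀ k ∈ B, ∀ δ > 0, Function.update u k (u k + δ) ∉ P := by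
      intro k hk
      exact blocked_at_u hPoly hInt hu huz (hcase k (Finset.mem_filter.mp hk).2)
    have := tightUnion hPoly hu B hblB v hv (fun j hj => by
      by_contra hcon
      push_neg at hcon
      exact hj (Finset.mem_filter.mpr ⟨Finset.mem_univ j, hcon⟩))
    linarith
end

section
/- Let P ⊆ ℤ_+^n be a discrete polymatroid with set of bases B(P), and let ρ_P : 2^[n] → ℤ be defined by ρ_P(X) = max{ Σ_{i∈X} u(i) : u ∈ B(P) } for ∅ ≠ X ⊆ [n] and ρ_P(∅) = 0. If X_1 ⊆ X_2 ⊆ ⋯ ⊆ X_s ⊆ [n] is a chain of subsets of [n], then there exists a base u ∈ B(P) such that Σ_{i∈X_k} u(i) = ρ_P(X_k) for all 1 ≤ k ≤ s. -/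
/-- The ground set rank function `ρ_P` associated with a discrete polymatroid
`P`: `ρ_P(X) = max { Σ_{i∈X} u(i) : u ∈ B(P) }` (and `ρ_P(∅) = 0`, which the
supremum automatically yields since the empty sum is `0`). -/
noncomputable def rhoP {n : ℕ} (P : Set (Fin n → ℕ)) (X : Finset (Fin n)) : ℕ :=
  sSup ((fun u => ∑ i ∈ X, u i) '' {u | IsBaseOf P u})

/-- Lemma 3.2: for every chain `X_1 ⊆ X_2 ⊆ ⋯ ⊆ X_s ⊆ [n]` there is a base
`u ∈ B(P)` with `u(X_k) = ρ_P(X_k)` for all `k`. -/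
theorem exists_base_attaining_chain {n s : ℕ} (P : Set (Fin n → ℕ))
    (hP : IsDiscretePolymatroid P)
    (X : Fin s → Finset (Fin n)) (hchain : ∀ k l, k ≤ l → X k ⊆ X l) :
    ∃ u, IsBaseOf P u ∧ ∀ k, ∑ i ∈ X k, u i = rhoP P (X k) := by
  obtain ⟨hne, hfin, hdown, hexch⟩ := hP
  have h0 : (0 : Fin n → ℕ) ∈ P := by
    obtain ⟨u, hu⟩ := hne
    exact hdown u hu 0 (fun i => Nat.zero_le _)
  -- strict sums
  have hsum_lt : ∀ u v : Fin n → ℕ, u < v → ∑ i, u i < ∑ i, v i := by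
    intro u v huv
    have hle := le_of_lt huv
    have hne' : u ≠ v := ne_of_lt huv
    have : ∃ i, u i < v i := by
      by_contra h
      push_neg at h
      exact hne' (funext fun i => le_antisymm (hle i) (h i))
    obtain ⟨i, hi⟩ := this
    exact Finset.sum_lt_sum (fun j _ => hle j) ⟨i, Finset.mem_univ i, hi⟩
  have hsum_eq : ∀ u v : Fin n → ℕ, u ≤ v → ∑ i, v i ≤ ∑ i, u i → v = u := by
    intro u v huv hs
    by_contra hne'
    have := hsum_lt u v (lt_of_le_of_ne huv (Ne.symm hne'))
    omega
  -- extend any element of P to a base above it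
  have hbase_ge : ∀ w ∈ P, ∃ u, IsBaseOf P u ∧ w ≤ u := by
    intro w hw
    have hSfin : {v | v ∈ P ∧ w ≤ v}.Finite := hfin.subset (fun v hv => hv.1)
    obtain ⟨u, hu, hmax⟩ := Set.Finite.exists_maximalFor (fun v => ∑ i, v i)
      {v | v ∈ P ∧ w ≤ v} hSfin ⟨w, hw, le_refl w⟩
    refine ⟨u, ⟨hu.1, ?_⟩, hu.2⟩
    intro v hv huv
    have hvS : v ∈ {v | v ∈ P ∧ w ≤ v} := ⟨hv, le_trans hu.2 huv⟩
    have hfle : ∑ i, u i ≤ ∑ i, v i := Finset.sum_le_sum (fun i _ => huv i)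
    exact hsum_eq u v huv (hmax hvS hfle)
  -- bases
  have hbfin : {u | IsBaseOf P u}.Finite := hfin.subset (fun u hu => hu.1)
  have hle_rho : ∀ (Y : Finset (Fin n)) (u), IsBaseOf P u → ∑ i ∈ Y, u i ≤ rhoP P Y := by
    intro Y u hu
    exact le_csSup ((hbfin.image _).bddAbove) ⟨u, hu, rfl⟩
  -- the truncated maximum
  set M : Finset (Fin n) → ℕ :=
    fun Y => sSup ((fun w => ∑ i, w i) '' {w | w ∈ P ∧ ∀ i ∉ Y, w i = 0}) with hM
  have hTfin : ∀ Y : Finset (Fin n), {w | w ∈ P ∧ ∀ i ∉ Y, w i = 0}.Finite :=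
    fun Y => hfin.subset (fun w hw => hw.1)
  have hT0 : ∀ Y : Finset (Fin n), (0 : Fin n → ℕ) ∈ {w | w ∈ P ∧ ∀ i ∉ Y, w i = 0} :=
    fun Y => ⟨h0, fun i _ => rfl⟩
  have hM_attain : ∀ Y : Finset (Fin n),
      ∃ z, z ∈ P ∧ (∀ i ∉ Y, z i = 0) ∧ ∑ i, z i = M Y := by
    intro Y
    have hmem : M Y ∈ (fun w => ∑ i, w i) '' {w | w ∈ P ∧ ∀ i ∉ Y, w i = 0} :=
      Nat.sSup_mem ⟨_, ⟨0, hT0 Y, rfl⟩⟩ (((hTfin Y).image _).bddAbove)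
    obtain ⟨z, hz, hzeq⟩ := hmem
    exact ⟨z, hz.1, hz.2, hzeq⟩
  have hM_ub : ∀ Y : Finset (Fin n), ∀ w ∈ P, (∀ i ∉ Y, w i = 0) → ∑ i, w i ≤ M Y := by
    intro Y w hw hsupp
    exact le_csSup (((hTfin Y).image _).bddAbove) ⟨w, ⟨hw, hsupp⟩, rfl⟩
  -- restriction bound
  have hrestr : ∀ v ∈ P, ∀ Y : Finset (Fin n), ∑ i ∈ Y, v i ≤ M Y := by
    intro v hv Y
    set vY : Fin n → ℕ := fun i => if i ∈ Y then v i else 0 with hvY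
    have hvYle : vY ≤ v := by
      intro i; simp only [hvY]; split <;> simp
    have hvYP : vY ∈ P := hdown v hv vY hvYle
    have hsum : ∑ i, vY i = ∑ i ∈ Y, v i := by
      simp only [hvY]
      rw [Finset.sum_ite_mem]
      simp
    have := hM_ub Y vY hvYP (fun i hi => by simp only [hvY]; simp [hi])
    omega
  -- climbing within a support
  have climb : ∀ (Y : Finset (Fin n)) (z : Fin n → ℕ), z ∈ P → (∀ i ∉ Y, z i = 0) →
      ∀ N : ℕ, ∀ w, w ∈ P → (∀ i ∉ Y, w i = 0) → ∑ i, z i ≤ ∑ i, w i + N →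
      ∃ w', w' ∈ P ∧ w ≤ w' ∧ (∀ i ∉ Y, w' i = 0) ∧ ∑ i, z i ≤ ∑ i, w' i := by
    intro Y z hz hzsupp N
    induction N with
    | zero => exact fun w hw hwsupp hN => ⟨w, hw, le_refl w, hwsupp, by omega⟩
    | succ N ih =>
      intro w hw hwsupp hN
      by_cases hle : ∑ i, z i ≤ ∑ i, w i
      · exact ⟨w, hw, le_refl w, hwsupp, hle⟩
      · obtain ⟨w'', hw'', hlt, hble⟩ := hexch w hw z hz (by omega)
        have hsupp'' : ∀ i ∉ Y, w'' i = 0 := by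
          intro i hi
          have h1 := hble i
          simp only [Pi.sup_apply, hwsupp i hi, hzsupp i hi] at h1
          omega
        have hlt' : ∑ i, w i < ∑ i, w'' i := hsum_lt w w'' hlt
        obtain ⟨w', h1, h2, h3, h4⟩ := ih w'' hw'' hsupp'' (by omega)
        exact ⟨w', h1, le_trans (le_of_lt hlt) h2, h3, h4⟩
  -- build element realizing all M (X k)
  have build : ∀ t : ℕ, t ≤ s → ∃ w, w ∈ P ∧
      (∀ i, w i ≠ 0 → ∃ k : Fin s, (k : ℕ) < t ∧ i ∈ X k) ∧
      (∀ k : Fin s, (k : ℕ) < t → M (X k) ≤ ∑ i ∈ X k, w i) := by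
    intro t
    induction t with
    | zero =>
      exact fun _ => ⟨0, h0, fun i hi => absurd rfl hi, fun k hk => absurd hk (by omega)⟩
    | succ t ih =>
      intro ht
      obtain ⟨w, hw, hwsupp, hwsum⟩ := ih (by omega)
      have hts : t < s := ht
      set kt : Fin s := ⟨t, hts⟩ with hkt
      have hwsuppX : ∀ i ∉ X kt, w i = 0 := by
        intro i hi
        by_contra h
        obtain ⟨k, hk, hik⟩ := hwsupp i h
        exact hi (hchain k kt (by simp [hkt, Fin.le_def]; omega) hik)
      obtain ⟨z, hz, hzsupp, hzsum⟩ := hM_attain (X kt)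
      obtain ⟨w', hw', hww', hw'supp, hw'sum⟩ :=
        climb (X kt) z hz hzsupp (∑ i, z i) w hw hwsuppX (by omega)
      refine ⟨w', hw', ?_, ?_⟩
      · intro i hi
        refine ⟨kt, by simp [hkt], ?_⟩
        by_contra h
        exact hi (hw'supp i h)
      · intro k hk
        rcases Nat.lt_succ_iff_lt_or_eq.mp hk with h | h
        · calc M (X k) ≤ ∑ i ∈ X k, w i := hwsum k h
            _ ≤ ∑ i ∈ X k, w' i := Finset.sum_le_sum (fun i _ => hww' i)
        · have hkkt : k = kt := Fin.ext h
          rw [hkkt]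
          have hsum' : ∑ i ∈ X kt, w' i = ∑ i, w' i :=
            Finset.sum_subset (Finset.subset_univ (X kt)) (fun i _ hi => hw'supp i hi)
          omega
  obtain ⟨w, hw, _, hwsum⟩ := build s le_rfl
  obtain ⟨u, hu, hwu⟩ := hbase_ge w hw
  refine ⟨u, hu, ?_⟩
  intro k
  have h1 : ∑ i ∈ X k, u i ≤ rhoP P (X k) := hle_rho (X k) u hu
  have h2 : rhoP P (X k) ≤ ∑ i ∈ X k, u i := by
    simp only [rhoP]
    refine csSup_le ⟨∑ i ∈ X k, u i, ⟨u, hu, rfl⟩⟩ ?_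
    rintro b ⟨v, hv, rfl⟩
    calc ∑ i ∈ X k, v i ≤ M (X k) := hrestr v hv.1 (X k)
      _ ≤ ∑ i ∈ X k, w i := hwsum k k.isLt
      _ ≤ ∑ i ∈ X k, u i := Finset.sum_le_sum (fun i _ => hwu i)
  omega
end

section
/- Let P ⊆ ℤ_+^n be a discrete polymatroid with set of bases B(P), and let ρ_P : 2^[n] → ℤ be defined by ρ_P(X) = max{ Σ_{i∈X} u(i) : u ∈ B(P) } for ∅ ≠ X ⊆ [n] and ρ_P(∅) = 0. Then ρ_P is submodular: ρ_P(A) + ρ_P(B) ≥ ρ_P(A ∪ B) + ρ_P(A ∩ B) for all A, B ⊆ [n]. -/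
private lemma eq_of_le_sum_le {n : ℕ} {f g : Fin n → ℕ} (hle : f ≤ g)
    (hsum : ∑ i, g i ≤ ∑ i, f i) : g = f := by
  by_contra h
  have : ∃ i, f i < g i := by
    by_contra h2
    push_neg at h2
    exact h (funext fun i => le_antisymm (h2 i) (hle i))
  obtain ⟨i, hi⟩ := this
  have : ∑ i, f i < ∑ i, g i :=
    Finset.sum_lt_sum (fun j _ => hle j) ⟨i, Finset.mem_univ i, hi⟩
  omega

private lemma sum_lt_of_lt {n : ℕ} {f g : Fin n → ℕ} (h : f < g) :
    ∑ i, f i < ∑ i, g i := by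
  obtain ⟨hle, hne⟩ := lt_iff_le_and_ne.mp h
  have : ∃ i, f i < g i := by
    by_contra h2
    push_neg at h2
    exact hne (funext fun i => le_antisymm (hle i) (h2 i))
  obtain ⟨i, hi⟩ := this
  exact Finset.sum_lt_sum (fun j _ => hle j) ⟨i, Finset.mem_univ i, hi⟩

private lemma exists_base_ge {n : ℕ} {P : Set (Fin n → ℕ)}
    (hP : IsDiscretePolymatroid P) {u : Fin n → ℕ} (hu : u ∈ P) :
    ∃ b, IsBaseOf P b ∧ u ≤ b := by
  obtain ⟨-, hfin, -, -⟩ := hP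
  set S : Set (Fin n → ℕ) := {v ∈ P | u ≤ v} with hS
  have hSfin : S.Finite := hfin.subset (fun v hv => hv.1)
  have hSne : S.Nonempty := ⟨u, hu, le_refl u⟩
  obtain ⟨b, hbS, hbmax⟩ := hSfin.exists_maximalFor (fun v => ∑ i, v i) S hSne
  refine ⟨b, ⟨hbS.1, fun v hv hbv => ?_⟩, hbS.2⟩
  have hvS : v ∈ S := ⟨hv, le_trans hbS.2 hbv⟩
  by_cases h : ∑ i, b i ≤ ∑ i, v i
  · exact eq_of_le_sum_le hbv (hbmax hvS h)
  · exact eq_of_le_sum_le hbv (le_of_not_ge h)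

private lemma augment {n : ℕ} {P : Set (Fin n → ℕ)}
    (hP : IsDiscretePolymatroid P) :
    ∀ k : ℕ, ∀ u ∈ P, ∀ v ∈ P, (∑ i, (u ⊔ v) i) - ∑ i, u i ≤ k →
      ∃ w ∈ P, u ≤ w ∧ w ≤ u ⊔ v ∧ ∑ i, v i ≤ ∑ i, w i := by
  obtain ⟨-, -, -, hex⟩ := hP
  intro k
  induction k with
  | zero =>
    intro u hu v hv hk
    refine ⟨u, hu, le_refl u, le_sup_left, ?_⟩
    have h1 : ∑ i, v i ≤ ∑ i, (u ⊔ v) i :=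
      Finset.sum_le_sum (fun i _ => le_sup_right (a := u i))
    omega
  | succ k ih =>
    intro u hu v hv hk
    by_cases hle : ∑ i, v i ≤ ∑ i, u i
    · exact ⟨u, hu, le_refl u, le_sup_left, hle⟩
    · push_neg at hle
      obtain ⟨w', hw'P, hw'gt, hw'le⟩ := hex u hu v hv hle
      have hsum : ∑ i, u i < ∑ i, w' i := sum_lt_of_lt hw'gt
      have hsup : w' ⊔ v ≤ u ⊔ v := sup_le hw'le le_sup_right
      have hk' : (∑ i, (w' ⊔ v) i) - ∑ i, w' i ≤ k := by
        have : ∑ i, (w' ⊔ v) i ≤ ∑ i, (u ⊔ v) i :=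
          Finset.sum_le_sum (fun i _ => hsup i)
        omega
      obtain ⟨w, hwP, hw1, hw2, hw3⟩ := ih w' hw'P v hv hk'
      exact ⟨w, hwP, le_trans hw'gt.le hw1, le_trans hw2 hsup, hw3⟩

private lemma rhoP_spec {n : ℕ} {P : Set (Fin n → ℕ)}
    (hP : IsDiscretePolymatroid P) (X : Finset (Fin n)) :
    (∃ b, IsBaseOf P b ∧ rhoP P X = ∑ i ∈ X, b i) ∧
      ∀ b, IsBaseOf P b → ∑ i ∈ X, b i ≤ rhoP P X := by
  have hfin : ((fun u => ∑ i ∈ X, u i) '' {u | IsBaseOf P u}).Finite :=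
    (hP.2.1.subset (fun u hu => hu.1)).image _
  have hne : ((fun u => ∑ i ∈ X, u i) '' {u | IsBaseOf P u}).Nonempty := by
    obtain ⟨u, hu⟩ := hP.1
    obtain ⟨b, hb, -⟩ := exists_base_ge hP hu
    exact ⟨_, ⟨b, hb, rfl⟩⟩
  have hbdd : BddAbove ((fun u => ∑ i ∈ X, u i) '' {u | IsBaseOf P u}) :=
    hfin.bddAbove
  constructor
  · obtain ⟨b, hb, heq⟩ := Nat.sSup_mem hne hbdd
    exact ⟨b, hb, heq.symm⟩
  · intro b hb
    exact le_csSup hbdd ⟨b, hb, rfl⟩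

/-- Corollary 3.3: the function `ρ_P` is submodular, i.e.
`ρ_P(A) + ρ_P(B) ≥ ρ_P(A ∪ B) + ρ_P(A ∩ B)` for all `A, B ⊆ [n]`. -/
theorem rhoP_submodular {n : ℕ} (P : Set (Fin n → ℕ))
    (hP : IsDiscretePolymatroid P) (A B : Finset (Fin n)) :
    rhoP P (A ∪ B) + rhoP P (A ∩ B) ≤ rhoP P A + rhoP P B := by
  obtain ⟨hne, hfin, hdown, hex⟩ := hP
  obtain ⟨⟨b1, hb1, hb1eq⟩, -⟩ := rhoP_spec ⟨hne, hfin, hdown, hex⟩ (A ∪ B)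
  obtain ⟨⟨b2, hb2, hb2eq⟩, -⟩ := rhoP_spec ⟨hne, hfin, hdown, hex⟩ (A ∩ B)
  -- restrictions
  set u : Fin n → ℕ := fun i => if i ∈ A ∩ B then b2 i else 0 with hu_def
  set v : Fin n → ℕ := fun i => if i ∈ A ∪ B then b1 i else 0 with hv_def
  have huP : u ∈ P := hdown b2 hb2.1 u (fun i => by
    simp only [hu_def]; split <;> simp)
  have hvP : v ∈ P := hdown b1 hb1.1 v (fun i => by
    simp only [hv_def]; split <;> simp)
  have husum : ∑ i, u i = ∑ i ∈ A ∩ B, b2 i := by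
    rw [hu_def, Finset.sum_ite_mem, Finset.univ_inter]
  have hvsum : ∑ i, v i = ∑ i ∈ A ∪ B, b1 i := by
    rw [hv_def, Finset.sum_ite_mem, Finset.univ_inter]
  obtain ⟨w, hwP, hw1, hw2, hw3⟩ := augment ⟨hne, hfin, hdown, hex⟩
    ((∑ i, (u ⊔ v) i) - ∑ i, u i) u huP v hvP le_rfl
  obtain ⟨b, hb, hwb⟩ := exists_base_ge ⟨hne, hfin, hdown, hex⟩ hwP
  obtain ⟨-, hmaxA⟩ := rhoP_spec ⟨hne, hfin, hdown, hex⟩ A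
  obtain ⟨-, hmaxB⟩ := rhoP_spec ⟨hne, hfin, hdown, hex⟩ B
  -- w is zero outside A ∪ B
  have hwsupp : ∀ i, i ∉ A ∪ B → w i = 0 := by
    intro i hi
    have h1 : u i = 0 := by
      simp only [hu_def]
      rw [if_neg (fun h => hi (Finset.mem_union_left _ (Finset.mem_of_mem_inter_left h)))]
    have h2 : v i = 0 := by simp only [hv_def]; rw [if_neg hi]
    have := hw2 i
    simp only [Pi.sup_apply, h1, h2] at this
    omega
  have hwuniv : ∑ i ∈ A ∪ B, w i = ∑ i, w i := by
    rw [← Finset.sum_subset (Finset.subset_univ (A ∪ B))]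
    intro i _ hi
    exact hwsupp i hi
  have key1 : rhoP P (A ∪ B) ≤ ∑ i ∈ A ∪ B, w i := by
    rw [hb1eq, ← hvsum, hwuniv]; exact hw3
  have key2 : rhoP P (A ∩ B) ≤ ∑ i ∈ A ∩ B, w i := by
    rw [hb2eq]
    calc ∑ i ∈ A ∩ B, b2 i = ∑ i ∈ A ∩ B, u i := by
          apply Finset.sum_congr rfl
          intro i hi
          simp only [hu_def]; rw [if_pos hi]
      _ ≤ ∑ i ∈ A ∩ B, w i := Finset.sum_le_sum (fun i _ => hw1 i)
  have hwb' : ∀ X : Finset (Fin n), ∑ i ∈ X, w i ≤ ∑ i ∈ X, b i :=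
    fun X => Finset.sum_le_sum (fun i _ => hwb i)
  have hsum : ∑ i ∈ A ∪ B, b i + ∑ i ∈ A ∩ B, b i = ∑ i ∈ A, b i + ∑ i ∈ B, b i :=
    Finset.sum_union_inter
  have hA := hmaxA b hb
  have hB := hmaxB b hb
  have h1 := hwb' (A ∪ B)
  have h2 := hwb' (A ∩ B)
  omega
end

section
/- A nonempty finite set P ⊆ ℤ_+^n is a discrete polymatroid if and only if the convex hull conv(P) ⊆ ℝ_+^n of P in ℝ^n is an integral polymatroid on [n] satisfying conv(P) ∩ ℤ^n = P. -/
open Finset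
open scoped Classical

/-- The canonical embedding `ℤ_+^n → ℝ^n`. -/
def toReal {n : ℕ} (u : Fin n → ℕ) : Fin n → ℝ := fun i => (u i : ℝ)


open Finset
open scoped Classical





section Helpers

variable {n : ℕ}

theorem measure_lt {K a b r r' : ℕ} (hab : a < b) (hr' : r' ≤ K) :
    a * (K + 1) + r' < b * (K + 1) + r := by
  have h1 : (a + 1) * (K + 1) ≤ b * (K + 1) :=
    Nat.mul_le_mul (Nat.succ_le_of_lt hab) (le_refl _)
  have h2 : (a + 1) * (K + 1) = a * (K + 1) + K + 1 := by ring
  omega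

theorem measure_lt2 {K a b r r' : ℕ} (hab : a ≤ b) (hr : r' < r) :
    a * K + r' < b * K + r := by
  have := Nat.mul_le_mul hab (le_refl K)
  omega

theorem sum_update_not_mem {M : Type*} [AddCommMonoid M] {A : Finset (Fin n)} {j : Fin n}
    (hj : j ∉ A) (f : Fin n → M) (c : M) :
    ∑ i ∈ A, Function.update f j c i = ∑ i ∈ A, f i :=
  Finset.sum_congr rfl fun k hk => Function.update_of_ne (fun h => hj (by rw [← h]; exact hk)) _ _

theorem sum_update_mem {M : Type*} [AddCommMonoid M] {A : Finset (Fin n)} {j : Fin n}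
    (hj : j ∈ A) (f : Fin n → M) (c : M) :
    (∑ i ∈ A, Function.update f j c i) + f j = (∑ i ∈ A, f i) + c := by
  rw [Finset.sum_update_of_mem hj, ← Finset.erase_eq, ← Finset.add_sum_erase A f hj]
  abel

/-- `bump v j` adds one to the `j`-th coordinate. -/
def bump (v : Fin n → ℕ) (j : Fin n) : Fin n → ℕ := Function.update v j (v j + 1)

theorem bump_apply (v : Fin n → ℕ) (j k : Fin n) :
    bump v j k = if k = j then v j + 1 else v k := Function.update_apply ..

theorem le_bump (v : Fin n → ℕ) (j : Fin n) : v ≤ bump v j := by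
  intro k
  rw [bump_apply]
  split
  · next h => subst h; exact Nat.le_succ _
  · exact le_refl _

theorem sum_bump (v : Fin n → ℕ) (j : Fin n) (A : Finset (Fin n)) :
    ∑ i ∈ A, bump v j i = (∑ i ∈ A, v i) + (if j ∈ A then 1 else 0) := by
  have hb : (∑ i ∈ A, bump v j i) = ∑ i ∈ A, Function.update v j (v j + 1) i := rfl
  by_cases hj : j ∈ A
  · have h := sum_update_mem hj v (v j + 1)
    rw [if_pos hj, hb]
    omega
  · have h := sum_update_not_mem hj v (v j + 1)
    rw [if_neg hj, hb]
    omega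

/-- The discrete measure used for the stuck-set lemma. -/
noncomputable def dmeas {n : ℕ} (v : Fin n → ℕ) (K : ℕ) (z : Fin n → ℕ) : ℕ :=
  (∑ j, (z j - v j)) * (K + 1) + (K - ∑ j, z j)

theorem dmeas_lt₁ {n : ℕ} {v z z' : Fin n → ℕ} {K : ℕ}
    (h : ∑ j, (z' j - v j) < ∑ j, (z j - v j)) : dmeas v K z' < dmeas v K z :=
  measure_lt h (Nat.sub_le _ _)

theorem dmeas_lt₂ {n : ℕ} {v z z' : Fin n → ℕ} {K : ℕ}
    (hphi : ∑ j, (z' j - v j) ≤ ∑ j, (z j - v j)) (hsum : ∑ j, z j < ∑ j, z' j)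
    (hK : ∑ j, z' j ≤ K) : dmeas v K z' < dmeas v K z :=
  measure_lt2 hphi (by omega)

theorem sum_bump_univ (v : Fin n → ℕ) (j : Fin n) :
    ∑ i, bump v j i = (∑ i, v i) + 1 := by
  rw [sum_bump]; simp

end Helpers

section Discrete

variable {n : ℕ} {P : Set (Fin n → ℕ)}

/-- The ground rank function of `P`. -/
noncomputable def rk (hfin : P.Finite) (A : Finset (Fin n)) : ℕ :=
  hfin.toFinset.sup fun u => ∑ i ∈ A, u i

theorem rk_le (hfin : P.Finite) {u : Fin n → ℕ} (hu : u ∈ P) (A : Finset (Fin n)) :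
    ∑ i ∈ A, u i ≤ rk hfin A :=
  Finset.le_sup (by simpa using hu)

theorem rk_attained (hne : P.Nonempty) (hfin : P.Finite) (A : Finset (Fin n)) :
    ∃ u ∈ P, ∑ i ∈ A, u i = rk hfin A := by
  obtain ⟨u, hu, h⟩ := Finset.exists_mem_eq_sup hfin.toFinset
    (by simpa using hne) (fun u => ∑ i ∈ A, u i)
  exact ⟨u, by simpa using hu, h.symm⟩

theorem zero_mem (hne : P.Nonempty) (hdown : ∀ u ∈ P, ∀ v, v ≤ u → v ∈ P) :
    (fun _ => 0 : Fin n → ℕ) ∈ P := by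
  obtain ⟨w, hw⟩ := hne
  exact hdown w hw _ (fun i => Nat.zero_le _)

theorem unit_exchange (hdown : ∀ u ∈ P, ∀ v, v ≤ u → v ∈ P)
    (hex : ∀ u ∈ P, ∀ v ∈ P, ∑ i, u i < ∑ i, v i → ∃ w ∈ P, u < w ∧ w ≤ u ⊔ v)
    {u v : Fin n → ℕ} (hu : u ∈ P) (hv : v ∈ P) (h : ∑ i, u i < ∑ i, v i) :
    ∃ j, u j < v j ∧ bump u j ∈ P := by
  obtain ⟨w, hw, huw, hwle⟩ := hex u hu v hv h
  obtain ⟨hle, j, hj⟩ := Pi.lt_def.mp huw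
  refine ⟨j, ?_, hdown w hw _ ?_⟩
  · by_contra hvu
    push_neg at hvu
    have hs : w j ≤ u j := by
      have hs0 := hwle j
      rw [Pi.sup_apply, sup_eq_left.mpr hvu] at hs0
      exact hs0
    exact absurd hj (not_lt.mpr hs)
  · intro k
    rcases eq_or_ne k j with rfl | hk
    · rw [bump_apply, if_pos rfl]
      exact hj
    · rw [bump_apply, if_neg hk]; exact hle k

/-- The key "stuck set" lemma: if `A` is exactly the set of coordinates in which `v`
cannot be increased inside `P`, then `A` is tight at `v`. -/
theorem stuck_discrete (hne : P.Nonempty) (hfin : P.Finite)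
    (hdown : ∀ u ∈ P, ∀ v, v ≤ u → v ∈ P)
    (hex : ∀ u ∈ P, ∀ v ∈ P, ∑ i, u i < ∑ i, v i → ∃ w ∈ P, u < w ∧ w ≤ u ⊔ v)
    {v : Fin n → ℕ} (hv : v ∈ P) (A : Finset (Fin n))
    (hA : ∀ j, j ∈ A ↔ bump v j ∉ P) :
    ∀ z ∈ P, ∑ i ∈ A, z i ≤ ∑ i ∈ A, v i := by
  by_contra hcon
  push_neg at hcon
  obtain ⟨z₀, hz₀, hz₀A⟩ := hcon
  classical
  set Zfin : Finset (Fin n → ℕ) :=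
    hfin.toFinset.filter (fun z => ∑ i ∈ A, v i < ∑ i ∈ A, z i) with hZ
  have hZne : Zfin.Nonempty := ⟨z₀, by simp [hZ, hz₀, hz₀A]⟩
  obtain ⟨z, hzZ, hzmin⟩ := Finset.exists_min_image Zfin (dmeas v (rk hfin Finset.univ)) hZne
  have hmemZ : ∀ w : Fin n → ℕ, w ∈ P → ∑ i ∈ A, v i < ∑ i ∈ A, w i → w ∈ Zfin := by
    intro w hw h
    simp [hZ, hw, h]
  rw [hZ, Finset.mem_filter, Set.Finite.mem_toFinset] at hzZ
  obtain ⟨hz, hzA⟩ := hzZ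
  -- fact 1 : off A, z is dominated by v
  have fact1 : ∀ j, j ∉ A → z j ≤ v j := by
    intro j hj
    by_contra hgt
    push_neg at hgt
    have hz'P : Function.update z j (v j) ∈ P := by
      refine hdown z hz _ (fun k => ?_)
      rw [Function.update_apply]
      split
      · next h => subst h; exact le_of_lt hgt
      · exact le_refl _
    have hz'A : ∑ i ∈ A, Function.update z j (v j) i = ∑ i ∈ A, z i :=
      sum_update_not_mem hj _ _
    have hz'Z : Function.update z j (v j) ∈ Zfin :=
      hmemZ (Function.update z j (v j)) hz'P (by omega)
    have hΦlt : ∑ k, (Function.update z j (v j) k - v k) < ∑ k, (z k - v k) := by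
      apply Finset.sum_lt_sum
      · intro k _
        rw [Function.update_apply]
        split
        · next h => subst h; omega
        · exact le_refl _
      · refine ⟨j, Finset.mem_univ j, ?_⟩
        rw [Function.update_self]
        omega
    exact absurd (dmeas_lt₁ hΦlt) (not_lt.mpr (hzmin _ hz'Z))
  -- the common final step
  have key : ∀ l, z l < v l → bump z l ∈ P → False := by
    intro l hl hblP
    have hbl : bump z l ∈ Zfin := by
      refine hmemZ _ hblP ?_
      rw [sum_bump]
      split <;> omega
    have hΦeq : ∑ k, (bump z l k - v k) = ∑ k, (z k - v k) := by
      apply Finset.sum_congr rfl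
      intro k _
      rw [bump_apply]
      split
      · next h => subst h; omega
      · rfl
    have hbound : ∑ j, bump z l j ≤ rk hfin Finset.univ := rk_le hfin hblP Finset.univ
    have hlt : dmeas v (rk hfin Finset.univ) (bump z l) < dmeas v (rk hfin Finset.univ) z := by
      refine dmeas_lt₂ (le_of_eq hΦeq) ?_ hbound
      rw [sum_bump_univ]
      omega
    exact absurd hlt (not_lt.mpr (hzmin _ hbl))
  rcases Nat.lt_trichotomy (∑ j, z j) (∑ j, v j) with hlt | heq | hgt
  · obtain ⟨l, hl, hblP⟩ := unit_exchange hdown hex hz hv hlt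
    exact key l hl hblP
  · -- equal moduli
    have hcompl : ∑ i ∈ Aᶜ, z i < ∑ i ∈ Aᶜ, v i := by
      have h1 := Finset.sum_add_sum_compl A z
      have h2 := Finset.sum_add_sum_compl A v
      omega
    obtain ⟨i, hiA, hi⟩ := Finset.exists_lt_of_sum_lt hcompl
    have hiA' : i ∉ A := by simpa using hiA
    have hbvP : bump v i ∈ P := by
      by_contra hc
      exact hiA' ((hA i).mpr hc)
    have hsv : ∑ j, z j < ∑ j, bump v i j := by rw [sum_bump_univ]; omega
    obtain ⟨l, hl, hblP⟩ := unit_exchange hdown hex hz hbvP hsv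
    have hlv : z l < v l := by
      rcases eq_or_ne l i with rfl | hne'
      · exact hi
      · rw [bump_apply, if_neg hne'] at hl
        exact hl
    exact key l hlv hblP
  · obtain ⟨j, hj, hbvP⟩ := unit_exchange hdown hex hv hz hgt
    have hjA : j ∈ A := by
      by_contra hjA
      exact absurd (fact1 j hjA) (by omega)
    exact ((hA j).mp hjA) hbvP

end Discrete

section Rank

variable {n : ℕ} {P : Set (Fin n → ℕ)}

/-- Restriction of a vector to a coordinate set. -/
def restr (S : Finset (Fin n)) (z : Fin n → ℕ) : Fin n → ℕ := fun k => if k ∈ S then z k else 0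

theorem restr_le (S : Finset (Fin n)) (z : Fin n → ℕ) : restr S z ≤ z := by
  intro k
  rw [restr]
  dsimp only
  split
  · exact le_refl _
  · exact Nat.zero_le _

theorem restr_zero {S : Finset (Fin n)} {k : Fin n} (hk : k ∉ S) (z : Fin n → ℕ) :
    restr S z k = 0 := by rw [restr]; simp [hk]

theorem sum_restr {S T : Finset (Fin n)} (hTS : T ⊆ S) (z : Fin n → ℕ) :
    ∑ i ∈ T, restr S z i = ∑ i ∈ T, z i :=
  Finset.sum_congr rfl fun k hk => by rw [restr]; simp [hTS hk]

theorem sum_eq_sum_inter {S : Finset (Fin n)} (z : Fin n → ℕ)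
    (hz : ∀ k, k ∉ S → z k = 0) : ∑ i, z i = ∑ i ∈ S, z i := by
  rw [← Finset.sum_add_sum_compl S z]
  have : ∑ i ∈ Sᶜ, z i = 0 :=
    Finset.sum_eq_zero fun i hi => hz i (by simpa using hi)
  omega

theorem mem_of_le_rk (hne : P.Nonempty) (hfin : P.Finite)
    (hdown : ∀ u ∈ P, ∀ v, v ≤ u → v ∈ P)
    (hex : ∀ u ∈ P, ∀ v ∈ P, ∑ i, u i < ∑ i, v i → ∃ w ∈ P, u < w ∧ w ≤ u ⊔ v) :
    ∀ u : Fin n → ℕ, (∀ A, ∑ i ∈ A, u i ≤ rk hfin A) → u ∈ P := by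
  suffices h : ∀ N : ℕ, ∀ u : Fin n → ℕ, ∑ i, u i ≤ N →
      (∀ A, ∑ i ∈ A, u i ≤ rk hfin A) → u ∈ P by
    intro u hu
    exact h (∑ i, u i) u (le_refl _) hu
  intro N
  induction N with
  | zero =>
    intro u hu _
    obtain ⟨w, hw⟩ := hne
    refine hdown w hw u (fun i => ?_)
    have h1 : u i ≤ ∑ j, u j := Finset.single_le_sum (f := u) (fun j _ => Nat.zero_le _) (Finset.mem_univ i)
    have : u i = 0 := by omega
    rw [this]
    exact Nat.zero_le _
  | succ N ih =>
    intro u hu hcon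
    by_cases hN : ∑ i, u i ≤ N
    · exact ih u hN hcon
    push_neg at hN
    have hpos : ∃ i, 0 < u i := by
      by_contra hc
      push_neg at hc
      have : ∑ i, u i = 0 := Finset.sum_eq_zero (fun i _ => Nat.le_zero.mp (hc i))
      omega
    obtain ⟨i, hi⟩ := hpos
    have hsum' : (∑ j, Function.update u i (u i - 1) j) + u i = (∑ j, u j) + (u i - 1) :=
      sum_update_mem (Finset.mem_univ i) u _
    have hcon' : ∀ A, ∑ j ∈ A, Function.update u i (u i - 1) j ≤ rk hfin A := by
      intro A
      by_cases hiA : i ∈ A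
      · have h1 := sum_update_mem hiA u (u i - 1)
        have h2 := hcon A
        omega
      · rw [sum_update_not_mem hiA]
        exact hcon A
    have hu'P : Function.update u i (u i - 1) ∈ P := by
      refine ih _ (by omega) hcon'
    have hbu : bump (Function.update u i (u i - 1)) i = u := by
      funext k
      rw [bump_apply]
      rcases eq_or_ne k i with rfl | hk
      · rw [if_pos rfl, Function.update_self]
        omega
      · rw [if_neg hk, Function.update_of_ne hk]
    by_contra huP
    classical
    have hstuck := stuck_discrete hne hfin hdown hex hu'P
      (Finset.univ.filter (fun j => bump (Function.update u i (u i - 1)) j ∉ P))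
      (fun j => by simp)
    have hiA : i ∈ Finset.univ.filter (fun j => bump (Function.update u i (u i - 1)) j ∉ P) := by
      simp only [Finset.mem_filter, Finset.mem_univ, true_and]
      rw [hbu]
      exact huP
    obtain ⟨zm, hzm, hzmeq⟩ := rk_attained hne hfin
      (Finset.univ.filter (fun j => bump (Function.update u i (u i - 1)) j ∉ P))
    have h1 := hstuck zm hzm
    have h2 := hcon (Finset.univ.filter (fun j => bump (Function.update u i (u i - 1)) j ∉ P))
    have h3 := sum_update_mem hiA u (u i - 1)
    omega

theorem rk_submod (hne : P.Nonempty) (hfin : P.Finite)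
    (hdown : ∀ u ∈ P, ∀ v, v ≤ u → v ∈ P)
    (hex : ∀ u ∈ P, ∀ v ∈ P, ∑ i, u i < ∑ i, v i → ∃ w ∈ P, u < w ∧ w ≤ u ⊔ v)
    (A B : Finset (Fin n)) :
    rk hfin (A ∪ B) + rk hfin (A ∩ B) ≤ rk hfin A + rk hfin B := by
  classical
  set K := rk hfin Finset.univ with hK
  set F := hfin.toFinset.filter (fun u => ∀ k, k ∉ A ∪ B → u k = 0) with hF
  have hmemF : ∀ w : Fin n → ℕ, w ∈ P → (∀ k, k ∉ A ∪ B → w k = 0) → w ∈ F := by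
    intro w hw h
    rw [hF, Finset.mem_filter, Set.Finite.mem_toFinset]
    exact ⟨hw, h⟩
  have h0F : (fun _ => 0 : Fin n → ℕ) ∈ F := hmemF _ (zero_mem hne hdown) (fun _ _ => rfl)
  obtain ⟨u, huF, hmax⟩ := Finset.exists_max_image F
      (fun u => (∑ i ∈ A ∩ B, u i) * (K + 1) + ∑ i ∈ A ∪ B, u i) ⟨_, h0F⟩
  rw [hF, Finset.mem_filter, Set.Finite.mem_toFinset] at huF
  obtain ⟨huP, hsupp⟩ := huF
  have hub : ∑ i ∈ A ∪ B, u i ≤ K :=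
    le_trans (Finset.sum_le_sum_of_subset (Finset.subset_univ _)) (rk_le hfin huP _)
  -- restrictions are in F
  have hrestrF : ∀ (S : Finset (Fin n)), S ⊆ A ∪ B → ∀ z ∈ P, restr S z ∈ F := by
    intro S hS z hz
    refine hmemF _ (hdown z hz _ (restr_le S z)) (fun k hk => restr_zero (fun hkS => hk (hS hkS)) z)
  -- claim 1 : u attains the rank of A ∩ B
  have hAB : ∑ i ∈ A ∩ B, u i = rk hfin (A ∩ B) := by
    refine le_antisymm (rk_le hfin huP _) ?_
    by_contra hlt
    push_neg at hlt
    obtain ⟨zc, hzc, hzceq⟩ := rk_attained hne hfin (A ∩ B)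
    have hzF : restr (A ∩ B) zc ∈ F :=
      hrestrF _ (le_trans inf_le_left le_sup_left) zc hzc
    have hzsum : ∑ i ∈ A ∩ B, restr (A ∩ B) zc i = rk hfin (A ∩ B) := by
      rw [sum_restr (le_refl _) zc]
      exact hzceq
    have h1 := hmax _ hzF
    have hlt' : ∑ i ∈ A ∩ B, u i < ∑ i ∈ A ∩ B, restr (A ∩ B) zc i := by omega
    have h3 := measure_lt (r := ∑ i ∈ A ∪ B, restr (A ∩ B) zc i) hlt' hub
    omega
  -- claim 2 : u attains the rank of A ∪ B
  have hAU : ∑ i ∈ A ∪ B, u i = rk hfin (A ∪ B) := by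
    refine le_antisymm (rk_le hfin huP _) ?_
    by_contra hlt
    push_neg at hlt
    obtain ⟨zc, hzc, hzceq⟩ := rk_attained hne hfin (A ∪ B)
    have hzF : restr (A ∪ B) zc ∈ F := hrestrF _ (le_refl _) zc hzc
    have hzP : restr (A ∪ B) zc ∈ P := hdown zc hzc _ (restr_le _ zc)
    have hzsum : ∑ i ∈ A ∪ B, restr (A ∪ B) zc i = rk hfin (A ∪ B) := by
      rw [sum_restr (le_refl _) zc]
      exact hzceq
    have husum : ∑ i, u i = ∑ i ∈ A ∪ B, u i := sum_eq_sum_inter u hsupp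
    have hzsum' : ∑ i, restr (A ∪ B) zc i = ∑ i ∈ A ∪ B, restr (A ∪ B) zc i :=
      sum_eq_sum_inter _ (fun k hk => restr_zero hk zc)
    obtain ⟨j, hj, hbP⟩ := unit_exchange hdown hex huP hzP (by omega)
    have hjAB : j ∈ A ∪ B := by
      by_contra hjAB
      rw [restr_zero hjAB] at hj
      omega
    have hbF : bump u j ∈ F := by
      refine hmemF _ hbP (fun k hk => ?_)
      rw [bump_apply, if_neg (fun h => hk (by rw [h]; exact hjAB)), hsupp k hk]
    have h1 := hmax _ hbF
    have h2 := sum_bump u j (A ∩ B)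
    have h3 := sum_bump u j (A ∪ B)
    rw [if_pos hjAB] at h3
    by_cases hjint : j ∈ A ∩ B
    · rw [if_pos hjint] at h2
      rw [h2, h3] at h1
      have hr : ((∑ i ∈ A ∩ B, u i) + 1) * (K + 1)
          = (∑ i ∈ A ∩ B, u i) * (K + 1) + K + 1 := by ring
      omega
    · rw [if_neg hjint, add_zero] at h2
      rw [h2, h3] at h1
      omega
  have hsplit : (∑ i ∈ A ∪ B, u i) + ∑ i ∈ A ∩ B, u i = (∑ i ∈ A, u i) + ∑ i ∈ B, u i :=
    Finset.sum_union_inter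
  have hA' := rk_le hfin huP A
  have hB' := rk_le hfin huP B
  omega

end Rank

section RealSide

variable {n : ℕ} {P : Set (Fin n → ℕ)}

theorem sum_update_real {A : Finset (Fin n)} (f : Fin n → ℝ) (j : Fin n) (c : ℝ) :
    ∑ i ∈ A, Function.update f j c i = (∑ i ∈ A, f i) + (if j ∈ A then c - f j else 0) := by
  by_cases hj : j ∈ A
  · have := sum_update_mem hj f c
    rw [if_pos hj]
    linarith
  · rw [if_neg hj, sum_update_not_mem hj, add_zero]

theorem sum_update2 {A : Finset (Fin n)} (x : Fin n → ℝ) {i j : Fin n} (hij : i ≠ j) (t : ℝ) :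
    ∑ k ∈ A, Function.update (Function.update x i (x i + t)) j (x j - t) k
      = (∑ k ∈ A, x k) + (if i ∈ A then t else 0) - (if j ∈ A then t else 0) := by
  rw [sum_update_real, sum_update_real,
    Function.update_of_ne (fun h : j = i => hij h.symm)]
  split_ifs <;> ring

/-- coordinates with a non-integral value. -/
noncomputable def fsetF (x : Fin n → ℝ) : Finset (Fin n) :=
  Finset.univ.filter (fun i => ¬ ∃ z : ℤ, x i = (z : ℝ))

/-- number of non-tight constraints. -/
noncomputable def ntight (hfin : P.Finite) (x : Fin n → ℝ) : ℕ :=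
  (Finset.univ.powerset.filter
    (fun A : Finset (Fin n) => ∑ i ∈ A, x i ≠ (rk hfin A : ℝ))).card

/-- the decreasing measure for the hull induction. -/
noncomputable def meas (hfin : P.Finite) (x : Fin n → ℝ) : ℕ :=
  (fsetF x).card * (2 ^ n + 1) + ntight hfin x

theorem ntight_le (hfin : P.Finite) (x : Fin n → ℝ) : ntight hfin x ≤ 2 ^ n := by
  have h1 := Finset.card_filter_le (Finset.univ.powerset)
    (fun A : Finset (Fin n) => ∑ i ∈ A, x i ≠ (rk hfin A : ℝ))
  simpa [ntight, Finset.card_powerset] using h1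

theorem meas_lt_f (hfin : P.Finite) {x x' : Fin n → ℝ}
    (h : (fsetF x').card < (fsetF x).card) : meas hfin x' < meas hfin x :=
  measure_lt h (ntight_le hfin x')

theorem meas_lt_t (hfin : P.Finite) {x x' : Fin n → ℝ}
    (hsub : fsetF x' ⊆ fsetF x) (ht : ntight hfin x' < ntight hfin x) :
    meas hfin x' < meas hfin x :=
  measure_lt2 (Finset.card_le_card hsub) ht

theorem frac_floor_lt {x : ℝ} (h : ¬ ∃ z : ℤ, x = (z : ℝ)) : (⌊x⌋ : ℝ) < x :=
  lt_of_le_of_ne (Int.floor_le x) (fun he => h ⟨⌊x⌋, he.symm⟩)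

theorem frac_lt_ceil {x : ℝ} (h : ¬ ∃ z : ℤ, x = (z : ℝ)) : x < (⌈x⌉ : ℝ) :=
  lt_of_le_of_ne (Int.le_ceil x) (fun he => h ⟨⌈x⌉, he⟩)

/-- The rank polytope. -/
def Rset (hfin : P.Finite) : Set (Fin n → ℝ) :=
  {x | (∀ i, 0 ≤ x i) ∧ ∀ A : Finset (Fin n), ∑ i ∈ A, x i ≤ (rk hfin A : ℝ)}

theorem convex_Rset (hfin : P.Finite) : Convex ℝ (Rset hfin) := by
  intro x hx y hy a b ha hb hab
  constructor
  · intro i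
    have hxi := hx.1 i
    have hyi := hy.1 i
    have : (a • x + b • y) i = a * x i + b * y i := rfl
    rw [this]
    have := mul_nonneg ha hxi
    have := mul_nonneg hb hyi
    linarith
  · intro A
    have hsum : ∑ i ∈ A, (a • x + b • y) i
        = a * (∑ i ∈ A, x i) + b * (∑ i ∈ A, y i) := by
      rw [Finset.mul_sum, Finset.mul_sum, ← Finset.sum_add_distrib]
      exact Finset.sum_congr rfl fun k _ => rfl
    rw [hsum]
    have h1 := mul_le_mul_of_nonneg_left (hx.2 A) ha
    have h2 := mul_le_mul_of_nonneg_left (hy.2 A) hb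
    nlinarith [hx.2 A, hy.2 A]

theorem toReal_mem_Rset (hfin : P.Finite) {u : Fin n → ℕ} (hu : u ∈ P) :
    toReal u ∈ Rset hfin := by
  constructor
  · intro i
    exact Nat.cast_nonneg _
  · intro A
    have h := rk_le hfin hu A
    have h2 : ((∑ i ∈ A, u i : ℕ) : ℝ) ≤ (rk hfin A : ℝ) := Nat.cast_le.mpr h
    simpa [toReal, Nat.cast_sum] using h2

theorem conv_subset_Rset (hfin : P.Finite) :
    convexHull ℝ (toReal '' P) ⊆ Rset hfin :=
  convexHull_min (by rintro _ ⟨u, hu, rfl⟩; exact toReal_mem_Rset hfin hu) (convex_Rset hfin)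

theorem rk_empty (hfin : P.Finite) : rk hfin (∅ : Finset (Fin n)) = 0 :=
  Nat.le_zero.mp (Finset.sup_le fun u _ => by simp)

theorem tight_inter_union
    (hsubm : rk hfin (A ∪ B) + rk hfin (A ∩ B) ≤ rk hfin A + rk hfin B)
    {x : Fin n → ℝ} (hx : x ∈ Rset hfin)
    (hA : ∑ i ∈ A, x i = (rk hfin A : ℝ)) (hB : ∑ i ∈ B, x i = (rk hfin B : ℝ)) :
    (∑ i ∈ A ∪ B, x i = (rk hfin (A ∪ B) : ℝ))
      ∧ (∑ i ∈ A ∩ B, x i = (rk hfin (A ∩ B) : ℝ)) := by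
  have h1 := hx.2 (A ∪ B)
  have h2 := hx.2 (A ∩ B)
  have hsplit : (∑ i ∈ A ∪ B, x i) + ∑ i ∈ A ∩ B, x i
      = (∑ i ∈ A, x i) + ∑ i ∈ B, x i := Finset.sum_union_inter
  have hsubm' : ((rk hfin (A ∪ B) : ℝ) + (rk hfin (A ∩ B) : ℝ))
      ≤ (rk hfin A : ℝ) + (rk hfin B : ℝ) := by exact_mod_cast hsubm
  constructor <;> linarith

/-- membership in `Rset` after an upwards move bounded by all slacks through `i`
and a possible downwards move at `j`. -/
theorem perturb_pair (hfin : P.Finite) {x : Fin n → ℝ} {i j : Fin n}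
    (hx : x ∈ Rset hfin) (hij : i ≠ j)
    (hi : ¬ ∃ z : ℤ, x i = (z : ℝ)) (hj : ¬ ∃ z : ℤ, x j = (z : ℝ))
    (hkey : ∀ A : Finset (Fin n), ∑ k ∈ A, x k = (rk hfin A : ℝ) → (i ∈ A ↔ j ∈ A)) :
    ∃ t : ℝ, 0 < t ∧
      Function.update (Function.update x i (x i + t)) j (x j - t) ∈ Rset hfin ∧
      meas hfin (Function.update (Function.update x i (x i + t)) j (x j - t)) < meas hfin x := by
  classical
  set C : Finset (Finset (Fin n)) :=
    Finset.univ.powerset.filter (fun A => i ∈ A ∧ j ∉ A) with hC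
  have hCne : C.Nonempty := by
    refine ⟨{i}, ?_⟩
    rw [hC, Finset.mem_filter]
    refine ⟨Finset.mem_powerset.mpr (Finset.subset_univ _), Finset.mem_singleton_self i, ?_⟩
    rw [Finset.mem_singleton]
    exact fun h => hij h.symm
  have hCmem : ∀ A : Finset (Fin n), i ∈ A → j ∉ A → A ∈ C := by
    intro A h1 h2
    rw [hC, Finset.mem_filter]
    exact ⟨Finset.mem_powerset.mpr (Finset.subset_univ _), h1, h2⟩
  have hCslack : ∀ A ∈ C, ∑ k ∈ A, x k < (rk hfin A : ℝ) := by
    intro A hAC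
    rw [hC, Finset.mem_filter] at hAC
    rcases lt_or_eq_of_le (hx.2 A) with h | h
    · exact h
    · exact absurd ((hkey A h).mp hAC.2.1) hAC.2.2
  set img := C.image (fun A => (rk hfin A : ℝ) - ∑ k ∈ A, x k) with himg
  have himgne : img.Nonempty := hCne.image _
  set s1 := img.min' himgne with hs1
  have hs1pos : 0 < s1 := by
    rw [hs1]
    rw [Finset.lt_min'_iff]
    intro y hy
    rw [himg, Finset.mem_image] at hy
    obtain ⟨A, hAC, rfl⟩ := hy
    have := hCslack A hAC
    linarith
  have hs1le : ∀ A : Finset (Fin n), i ∈ A → j ∉ A →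
      s1 ≤ (rk hfin A : ℝ) - ∑ k ∈ A, x k := by
    intro A h1 h2
    exact Finset.min'_le _ _ (Finset.mem_image_of_mem _ (hCmem A h1 h2))
  set s2 := (⌈x i⌉ : ℝ) - x i with hs2
  have hs2pos : 0 < s2 := by
    rw [hs2]; have := frac_lt_ceil hi; linarith
  set s3 := x j - (⌊x j⌋ : ℝ) with hs3
  have hs3pos : 0 < s3 := by
    rw [hs3]; have := frac_floor_lt hj; linarith
  set t := min (min s1 s2) s3 with ht
  have htpos : 0 < t := lt_min (lt_min hs1pos hs2pos) hs3pos
  have hts1 : t ≤ s1 := le_trans (min_le_left _ _) (min_le_left _ _)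
  have hts2 : t ≤ s2 := le_trans (min_le_left _ _) (min_le_right _ _)
  have hts3 : t ≤ s3 := min_le_right _ _
  set x' := Function.update (Function.update x i (x i + t)) j (x j - t) with hx'
  have hvj : x' j = x j - t := Function.update_self _ _ _
  have hvi : x' i = x i + t := by
    rw [hx', Function.update_of_ne hij, Function.update_self]
  have hvk : ∀ k, k ≠ i → k ≠ j → x' k = x k := by
    intro k hk1 hk2
    rw [hx', Function.update_of_ne hk2, Function.update_of_ne hk1]
  have hsum : ∀ A : Finset (Fin n), ∑ k ∈ A, x' k
      = (∑ k ∈ A, x k) + (if i ∈ A then t else 0) - (if j ∈ A then t else 0) := by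
    intro A
    rw [hx']
    exact sum_update2 x hij t
  have hfloor : (0:ℝ) ≤ (⌊x j⌋ : ℝ) := by
    have : (0:ℤ) ≤ ⌊x j⌋ := Int.floor_nonneg.mpr (hx.1 j)
    exact_mod_cast this
  have hmem : x' ∈ Rset hfin := by
    constructor
    · intro k
      rcases eq_or_ne k j with rfl | hkj
      · rw [hvj]; linarith
      rcases eq_or_ne k i with rfl | hki
      · rw [hvi]; have := hx.1 k; linarith
      · rw [hvk k hki hkj]; exact hx.1 k
    · intro A
      rw [hsum A]
      by_cases h1 : i ∈ A <;> by_cases h2 : j ∈ A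
      · rw [if_pos h1, if_pos h2]
        have := hx.2 A; linarith
      · rw [if_pos h1, if_neg h2]
        have := hs1le A h1 h2; linarith
      · rw [if_neg h1, if_pos h2]
        have := hx.2 A; linarith
      · rw [if_neg h1, if_neg h2]
        have := hx.2 A; linarith
  have hfsub : fsetF x' ⊆ fsetF x := by
    intro k hk
    rw [fsetF, Finset.mem_filter] at hk ⊢
    refine ⟨Finset.mem_univ _, ?_⟩
    rcases eq_or_ne k i with rfl | hki
    · exact hi
    rcases eq_or_ne k j with rfl | hkj
    · exact hj
    · rw [hvk k hki hkj] at hk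
      exact hk.2
  refine ⟨t, htpos, hmem, ?_⟩
  -- now the measure decrease, by cases on which minimum is attained
  have hint_case : ∀ k, (∃ z : ℤ, x' k = (z : ℝ)) → (¬ ∃ z : ℤ, x k = (z:ℝ)) →
      meas hfin x' < meas hfin x := by
    intro k hk hxk
    refine meas_lt_f hfin (Finset.card_lt_card ?_)
    rw [Finset.ssubset_iff_of_subset hfsub]
    refine ⟨k, ?_, ?_⟩
    · rw [fsetF, Finset.mem_filter]; exact ⟨Finset.mem_univ _, hxk⟩
    · rw [fsetF, Finset.mem_filter]
      simp only [not_and, not_not]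
      intro
      exact hk
  rcases le_total (min s1 s2) s3 with hc1 | hc1
  · rcases le_total s1 s2 with hc2 | hc2
    · -- t = s1 : a new tight constraint appears
      have hts1' : t = s1 := by rw [ht, min_eq_left hc1, min_eq_left hc2]
      obtain ⟨Astar, hAstarC, hAstarval⟩ := Finset.mem_image.mp (Finset.min'_mem img himgne)
      rw [hC, Finset.mem_filter] at hAstarC
      obtain ⟨-, hiAs, hjAs⟩ := hAstarC
      have htightpres : ∀ A : Finset (Fin n), ∑ k ∈ A, x k = (rk hfin A : ℝ) →
          ∑ k ∈ A, x' k = (rk hfin A : ℝ) := by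
        intro A hA
        rw [hsum A]
        by_cases hiA : i ∈ A
        · rw [if_pos hiA, if_pos ((hkey A hA).mp hiA)]
          linarith
        · rw [if_neg hiA, if_neg (fun hjA => hiA ((hkey A hA).mpr hjA))]
          linarith
      have hAsnt : ∑ k ∈ Astar, x k ≠ (rk hfin Astar : ℝ) :=
        ne_of_lt (hCslack Astar (hCmem Astar hiAs hjAs))
      have hAst : ∑ k ∈ Astar, x' k = (rk hfin Astar : ℝ) := by
        rw [hsum Astar, if_pos hiAs, if_neg hjAs, hts1']
        linarith
      have hsub2 : (Finset.univ.powerset.filter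
            (fun A : Finset (Fin n) => ∑ k ∈ A, x' k ≠ (rk hfin A : ℝ)))
          ⊂ (Finset.univ.powerset.filter
            (fun A : Finset (Fin n) => ∑ k ∈ A, x k ≠ (rk hfin A : ℝ))) := by
        rw [Finset.ssubset_iff_of_subset]
        · exact ⟨Astar,
            Finset.mem_filter.mpr ⟨Finset.mem_powerset.mpr (Finset.subset_univ _), hAsnt⟩,
            fun hmem => (Finset.mem_filter.mp hmem).2 hAst⟩
        · intro A hA
          rw [Finset.mem_filter] at hA ⊢
          exact ⟨hA.1, fun he => hA.2 (htightpres A he)⟩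
      exact meas_lt_t hfin hfsub (Finset.card_lt_card hsub2)
    · -- t = s2 : coordinate i becomes integral
      have hts2' : t = s2 := by rw [ht, min_eq_left hc1, min_eq_right hc2]
      refine hint_case i ⟨⌈x i⌉, ?_⟩ hi
      rw [hvi, hts2', hs2]; ring
  · -- t = s3 : coordinate j becomes integral
    have hts3' : t = s3 := by rw [ht, min_eq_right hc1]
    refine hint_case j ⟨⌊x j⌋, ?_⟩ hj
    rw [hvj, hts3', hs3]; ring

end RealSide

section RealSide2

variable {n : ℕ} {P : Set (Fin n → ℕ)}

theorem perturb_up (hfin : P.Finite) {x : Fin n → ℝ} {i : Fin n}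
    (hx : x ∈ Rset hfin) (hi : ¬ ∃ z : ℤ, x i = (z : ℝ))
    (hslack : ∀ A : Finset (Fin n), i ∈ A → ∑ k ∈ A, x k < (rk hfin A : ℝ)) :
    ∃ t : ℝ, 0 < t ∧ Function.update x i (x i + t) ∈ Rset hfin ∧
      meas hfin (Function.update x i (x i + t)) < meas hfin x := by
  classical
  set C : Finset (Finset (Fin n)) := Finset.univ.powerset.filter (fun A => i ∈ A) with hC
  have hCmem : ∀ A : Finset (Fin n), i ∈ A → A ∈ C := fun A h => by
    rw [hC, Finset.mem_filter]
    exact ⟨Finset.mem_powerset.mpr (Finset.subset_univ _), h⟩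
  have hCne : C.Nonempty := ⟨{i}, hCmem _ (Finset.mem_singleton_self i)⟩
  set img := C.image (fun A => (rk hfin A : ℝ) - ∑ k ∈ A, x k) with himg
  have himgne : img.Nonempty := hCne.image _
  set s1 := img.min' himgne with hs1
  have hs1pos : 0 < s1 := by
    rw [hs1, Finset.lt_min'_iff]
    intro y hy
    rw [himg, Finset.mem_image] at hy
    obtain ⟨A, hAC, rfl⟩ := hy
    rw [hC, Finset.mem_filter] at hAC
    have := hslack A hAC.2
    linarith
  have hs1le : ∀ A : Finset (Fin n), i ∈ A → s1 ≤ (rk hfin A : ℝ) - ∑ k ∈ A, x k :=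
    fun A h => Finset.min'_le _ _ (Finset.mem_image_of_mem _ (hCmem A h))
  set s2 := (⌈x i⌉ : ℝ) - x i with hs2
  have hs2pos : 0 < s2 := by rw [hs2]; have := frac_lt_ceil hi; linarith
  set t := min s1 s2 with ht
  have htpos : 0 < t := lt_min hs1pos hs2pos
  have hts1 : t ≤ s1 := min_le_left _ _
  have hts2 : t ≤ s2 := min_le_right _ _
  set x' := Function.update x i (x i + t) with hx'
  have hvi : x' i = x i + t := Function.update_self _ _ _
  have hvk : ∀ k, k ≠ i → x' k = x k := fun k hk => Function.update_of_ne hk _ _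
  have hsum : ∀ A : Finset (Fin n),
      ∑ k ∈ A, x' k = (∑ k ∈ A, x k) + (if i ∈ A then t else 0) := by
    intro A
    rw [hx', sum_update_real]
    split_ifs <;> ring
  have hmem : x' ∈ Rset hfin := by
    constructor
    · intro k
      rcases eq_or_ne k i with rfl | hk
      · rw [hvi]; have := hx.1 k; linarith
      · rw [hvk k hk]; exact hx.1 k
    · intro A
      rw [hsum A]
      by_cases hiA : i ∈ A
      · rw [if_pos hiA]; have := hs1le A hiA; linarith
      · rw [if_neg hiA]; have := hx.2 A; linarith
  have hfsub : fsetF x' ⊆ fsetF x := by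
    intro k hk
    rw [fsetF, Finset.mem_filter] at hk ⊢
    refine ⟨Finset.mem_univ _, ?_⟩
    rcases eq_or_ne k i with rfl | hki
    · exact hi
    · rw [hvk k hki] at hk; exact hk.2
  refine ⟨t, htpos, hmem, ?_⟩
  rcases le_total s1 s2 with hc | hc
  · have hts1' : t = s1 := by rw [ht, min_eq_left hc]
    obtain ⟨Astar, hAstarC, hAstarval⟩ := Finset.mem_image.mp (Finset.min'_mem img himgne)
    rw [hC, Finset.mem_filter] at hAstarC
    obtain ⟨-, hiAs⟩ := hAstarC
    have htightpres : ∀ A : Finset (Fin n), ∑ k ∈ A, x k = (rk hfin A : ℝ) →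
        ∑ k ∈ A, x' k = (rk hfin A : ℝ) := by
      intro A hA
      have hiA : i ∉ A := fun h => absurd hA (ne_of_lt (hslack A h))
      rw [hsum A, if_neg hiA]; linarith
    have hAsnt : ∑ k ∈ Astar, x k ≠ (rk hfin Astar : ℝ) := ne_of_lt (hslack Astar hiAs)
    have hAst : ∑ k ∈ Astar, x' k = (rk hfin Astar : ℝ) := by
      rw [hsum Astar, if_pos hiAs, hts1']; linarith
    have hsub2 : (Finset.univ.powerset.filter
          (fun A : Finset (Fin n) => ∑ k ∈ A, x' k ≠ (rk hfin A : ℝ)))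
        ⊂ (Finset.univ.powerset.filter
          (fun A : Finset (Fin n) => ∑ k ∈ A, x k ≠ (rk hfin A : ℝ))) := by
      rw [Finset.ssubset_iff_of_subset]
      · exact ⟨Astar,
          Finset.mem_filter.mpr ⟨Finset.mem_powerset.mpr (Finset.subset_univ _), hAsnt⟩,
          fun hmem' => (Finset.mem_filter.mp hmem').2 hAst⟩
      · intro A hA
        rw [Finset.mem_filter] at hA ⊢
        exact ⟨hA.1, fun he => hA.2 (htightpres A he)⟩
    exact meas_lt_t hfin hfsub (Finset.card_lt_card hsub2)
  · have hts2' : t = s2 := by rw [ht, min_eq_right hc]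
    refine meas_lt_f hfin (Finset.card_lt_card ?_)
    rw [Finset.ssubset_iff_of_subset hfsub]
    refine ⟨i, Finset.mem_filter.mpr ⟨Finset.mem_univ _, hi⟩, ?_⟩
    rw [fsetF, Finset.mem_filter]
    simp only [not_and, not_not]
    intro
    exact ⟨⌈x i⌉, by rw [hvi, hts2', hs2]; ring⟩

theorem perturb_down (hfin : P.Finite) {x : Fin n → ℝ} {i : Fin n}
    (hx : x ∈ Rset hfin) (hi : ¬ ∃ z : ℤ, x i = (z : ℝ)) :
    ∃ t : ℝ, 0 < t ∧ Function.update x i (x i - t) ∈ Rset hfin ∧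
      meas hfin (Function.update x i (x i - t)) < meas hfin x := by
  set t := x i - (⌊x i⌋ : ℝ) with ht
  have htpos : 0 < t := by rw [ht]; have := frac_floor_lt hi; linarith
  have hfl : (0:ℝ) ≤ (⌊x i⌋ : ℝ) := by exact_mod_cast Int.floor_nonneg.mpr (hx.1 i)
  set x' := Function.update x i (x i - t) with hx'
  have hvi : x' i = (⌊x i⌋ : ℝ) := by rw [hx', Function.update_self, ht]; ring
  have hvk : ∀ k, k ≠ i → x' k = x k := fun k hk => Function.update_of_ne hk _ _
  have hmem : x' ∈ Rset hfin := by
    constructor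
    · intro k
      rcases eq_or_ne k i with rfl | hk
      · rw [hvi]; exact hfl
      · rw [hvk k hk]; exact hx.1 k
    · intro A
      rw [hx', sum_update_real]
      have := hx.2 A
      split_ifs <;> linarith
  refine ⟨t, htpos, hmem, ?_⟩
  have hfsub : fsetF x' ⊆ fsetF x := by
    intro k hk
    rw [fsetF, Finset.mem_filter] at hk ⊢
    refine ⟨Finset.mem_univ _, ?_⟩
    rcases eq_or_ne k i with rfl | hki
    · exact hi
    · rw [hvk k hki] at hk; exact hk.2
  refine meas_lt_f hfin (Finset.card_lt_card ?_)
  rw [Finset.ssubset_iff_of_subset hfsub]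
  refine ⟨i, Finset.mem_filter.mpr ⟨Finset.mem_univ _, hi⟩, ?_⟩
  rw [fsetF, Finset.mem_filter]
  simp only [not_and, not_not]
  intro
  exact ⟨⌊x i⌋, hvi⟩

theorem sum_isInt {x : Fin n → ℝ} (s : Finset (Fin n)) (h : ∀ k ∈ s, ∃ z : ℤ, x k = (z : ℝ)) :
    ∃ z : ℤ, ∑ k ∈ s, x k = (z : ℝ) := by
  classical
  induction s using Finset.induction_on with
  | empty => exact ⟨0, by simp⟩
  | @insert a s ha ih =>
    obtain ⟨z1, hz1⟩ := h _ (Finset.mem_insert_self _ _)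
    obtain ⟨z2, hz2⟩ := ih (fun k hk => h k (Finset.mem_insert_of_mem hk))
    refine ⟨z1 + z2, ?_⟩
    rw [Finset.sum_insert ha, hz1, hz2]
    push_cast
    ring

theorem int_mem (hne : P.Nonempty) (hfin : P.Finite)
    (hdown : ∀ u ∈ P, ∀ v, v ≤ u → v ∈ P)
    (hex : ∀ u ∈ P, ∀ v ∈ P, ∑ i, u i < ∑ i, v i → ∃ w ∈ P, u < w ∧ w ≤ u ⊔ v)
    {x : Fin n → ℝ} (hx : x ∈ Rset hfin) (hint : ∀ i, ∃ z : ℤ, x i = (z : ℝ)) :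
    x ∈ toReal '' P := by
  choose z hz using hint
  have hz0 : ∀ i, 0 ≤ z i := by
    intro i
    have := hx.1 i
    rw [hz i] at this
    exact_mod_cast this
  have hcast : ∀ i, (((z i).toNat : ℕ) : ℝ) = x i := by
    intro i
    have h1 : ((z i).toNat : ℤ) = z i := Int.toNat_of_nonneg (hz0 i)
    rw [hz i]
    exact_mod_cast congrArg (fun m : ℤ => (m : ℝ)) h1
  refine ⟨fun i => (z i).toNat, ?_, ?_⟩
  · apply mem_of_le_rk hne hfin hdown hex
    intro A
    have hsumcast : ((∑ i ∈ A, (z i).toNat : ℕ) : ℝ) = ∑ i ∈ A, x i := by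
      rw [Nat.cast_sum]
      exact Finset.sum_congr rfl fun i _ => hcast i
    have h2 := hx.2 A
    rw [← hsumcast] at h2
    exact_mod_cast h2
  · funext i
    exact hcast i

theorem mem_conv_combo {Q : Set (Fin n → ℝ)} {x y z : Fin n → ℝ}
    (hy : y ∈ convexHull ℝ Q) (hz : z ∈ convexHull ℝ Q) {a b : ℝ}
    (ha : 0 ≤ a) (hb : 0 ≤ b) (hab : a + b = 1) (hx : x = a • y + b • z) :
    x ∈ convexHull ℝ Q := by
  rw [hx]
  exact (convex_convexHull ℝ Q) hy hz ha hb hab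

theorem mem_conv_of_fset_empty (hne : P.Nonempty) (hfin : P.Finite)
    (hdown : ∀ u ∈ P, ∀ v, v ≤ u → v ∈ P)
    (hex : ∀ u ∈ P, ∀ v ∈ P, ∑ i, u i < ∑ i, v i → ∃ w ∈ P, u < w ∧ w ≤ u ⊔ v)
    {x : Fin n → ℝ} (hx : x ∈ Rset hfin) (h : fsetF x = ∅) :
    x ∈ convexHull ℝ (toReal '' P) := by
  refine subset_convexHull ℝ _ (int_mem hne hfin hdown hex hx (fun i => ?_))
  by_contra hc
  have hmem : i ∈ fsetF x := Finset.mem_filter.mpr ⟨Finset.mem_univ _, hc⟩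
  rw [h] at hmem
  exact absurd hmem (Finset.notMem_empty i)

theorem Rset_subset_conv (hne : P.Nonempty) (hfin : P.Finite)
    (hdown : ∀ u ∈ P, ∀ v, v ≤ u → v ∈ P)
    (hex : ∀ u ∈ P, ∀ v ∈ P, ∑ i, u i < ∑ i, v i → ∃ w ∈ P, u < w ∧ w ≤ u ⊔ v) :
    Rset hfin ⊆ convexHull ℝ (toReal '' P) := by
  classical
  suffices h : ∀ N : ℕ, ∀ x ∈ Rset hfin, meas hfin x ≤ N → x ∈ convexHull ℝ (toReal '' P) by
    intro x hx
    exact h (meas hfin x) x hx (le_refl _)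
  intro N
  induction N with
  | zero =>
    intro x hx hm
    have h0 : (fsetF x).card * (2 ^ n + 1) + ntight hfin x = 0 := Nat.le_zero.mp hm
    have hcard : (fsetF x).card * (2 ^ n + 1) = 0 := Nat.eq_zero_of_add_eq_zero_right h0
    have hcard0 : (fsetF x).card = 0 := by
      rcases Nat.mul_eq_zero.mp hcard with h | h
      · exact h
      · exact absurd h (Nat.succ_ne_zero _)
    exact mem_conv_of_fset_empty hne hfin hdown hex hx (Finset.card_eq_zero.mp hcard0)
  | succ N ih =>
    intro x hx hm
    by_cases hfs : fsetF x = ∅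
    · exact mem_conv_of_fset_empty hne hfin hdown hex hx hfs
    have hfne : (fsetF x).Nonempty := Finset.nonempty_iff_ne_empty.mpr hfs
    by_cases hcase : ∃ i ∈ fsetF x, ∀ A : Finset (Fin n), i ∈ A →
        ∑ k ∈ A, x k < (rk hfin A : ℝ)
    · -- single-coordinate wiggle
      obtain ⟨i, hifs, hslack⟩ := hcase
      have hi : ¬ ∃ z : ℤ, x i = (z : ℝ) := (Finset.mem_filter.mp hifs).2
      obtain ⟨t1, ht1, hmem1, hmlt1⟩ := perturb_up hfin hx hi hslack
      obtain ⟨t2, ht2, hmem2, hmlt2⟩ := perturb_down hfin hx hi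
      have hc1 := ih _ hmem1 (by omega)
      have hc2 := ih _ hmem2 (by omega)
      have ht12 : 0 < t1 + t2 := by linarith
      refine mem_conv_combo hc1 hc2 (a := t2 / (t1 + t2)) (b := t1 / (t1 + t2))
        (div_nonneg ht2.le ht12.le) (div_nonneg ht1.le ht12.le)
        (by field_simp; ring) ?_
      funext k
      show x k = _
      simp only [Pi.add_apply, Pi.smul_apply, smul_eq_mul]
      rcases eq_or_ne k i with rfl | hk
      · rw [Function.update_self, Function.update_self]
        field_simp
        ring
      · rw [Function.update_of_ne hk, Function.update_of_ne hk]
        field_simp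
        ring
    · -- every fractional coordinate lies in a tight set
      push_neg at hcase
      have htight : ∀ i ∈ fsetF x, ∃ A : Finset (Fin n), i ∈ A ∧
          ∑ k ∈ A, x k = (rk hfin A : ℝ) := by
        intro i hi
        obtain ⟨A, hiA, hge⟩ := hcase i hi
        exact ⟨A, hiA, le_antisymm (hx.2 A) hge⟩
      set fam : Fin n → Finset (Finset (Fin n)) := fun i =>
        Finset.univ.powerset.filter
          (fun A : Finset (Fin n) => i ∈ A ∧ ∑ k ∈ A, x k = (rk hfin A : ℝ)) with hfamdef
      have hfammem : ∀ i, ∀ A : Finset (Fin n), i ∈ A →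
          ∑ k ∈ A, x k = (rk hfin A : ℝ) → A ∈ fam i := by
        intro i A h1 h2
        rw [hfamdef]
        exact Finset.mem_filter.mpr ⟨Finset.mem_powerset.mpr (Finset.subset_univ _), h1, h2⟩
      have hfam : ∀ i ∈ fsetF x, (fam i).Nonempty := by
        intro i hi
        obtain ⟨A, hiA, hA⟩ := htight i hi
        exact ⟨A, hfammem i A hiA hA⟩
      set T : Fin n → Finset (Fin n) := fun i =>
        if h : (fam i).Nonempty then (fam i).inf' h id else Finset.univ with hT
      have hTprop : ∀ i, (fam i).Nonempty → i ∈ T i ∧ ∑ k ∈ T i, x k = (rk hfin (T i) : ℝ) := by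
        intro i hne'
        rw [hT]
        dsimp only
        rw [dif_pos hne']
        refine Finset.inf'_induction hne' id
          (p := fun B : Finset (Fin n) => i ∈ B ∧ ∑ k ∈ B, x k = (rk hfin B : ℝ)) ?_ ?_
        · intro B1 h1 B2 h2
          have hsubm := rk_submod hne hfin hdown hex B1 B2
          have hti := tight_inter_union hsubm hx h1.2 h2.2
          constructor
          · rw [Finset.inf_eq_inter]
            exact Finset.mem_inter.mpr ⟨h1.1, h2.1⟩
          · rw [Finset.inf_eq_inter]
            exact hti.2
        · intro A hA
          rw [hfamdef, Finset.mem_filter] at hA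
          exact ⟨hA.2.1, hA.2.2⟩
      have hTle : ∀ i, (fam i).Nonempty → ∀ A : Finset (Fin n), i ∈ A →
          ∑ k ∈ A, x k = (rk hfin A : ℝ) → T i ⊆ A := by
        intro i hne' A hiA htA
        rw [hT]
        dsimp only
        rw [dif_pos hne']
        exact Finset.inf'_le id (hfammem i A hiA htA)
      obtain ⟨i0, hi0f, hi0min⟩ := Finset.exists_min_image (fsetF x) (fun i => (T i).card) hfne
      have hi0 : ¬ ∃ z : ℤ, x i0 = (z : ℝ) := (Finset.mem_filter.mp hi0f).2
      obtain ⟨hi0T, hi0tight⟩ := hTprop i0 (hfam i0 hi0f)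
      -- find a second fractional coordinate in T i0
      have hjex : ∃ j ∈ (T i0).erase i0, ¬ ∃ z : ℤ, x j = (z : ℝ) := by
        by_contra hc
        push_neg at hc
        obtain ⟨zs, hzs⟩ := sum_isInt ((T i0).erase i0) hc
        have hsplit : x i0 + ∑ k ∈ (T i0).erase i0, x k = ∑ k ∈ T i0, x k :=
          Finset.add_sum_erase _ x hi0T
        refine hi0 ⟨(rk hfin (T i0) : ℤ) - zs, ?_⟩
        push_cast
        rw [← hi0tight, ← hsplit, hzs]
        ring
      obtain ⟨j, hjer, hj⟩ := hjex
      have hji0 : j ≠ i0 := (Finset.mem_erase.mp hjer).1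
      have hjT : j ∈ T i0 := (Finset.mem_erase.mp hjer).2
      have hjf : j ∈ fsetF x := Finset.mem_filter.mpr ⟨Finset.mem_univ _, hj⟩
      have hTjsub : T j ⊆ T i0 := hTle j (hfam j hjf) (T i0) hjT hi0tight
      have hTeq : T j = T i0 :=
        Finset.eq_of_subset_of_card_le hTjsub (hi0min j hjf)
      have hkey : ∀ A : Finset (Fin n), ∑ k ∈ A, x k = (rk hfin A : ℝ) →
          (i0 ∈ A ↔ j ∈ A) := by
        intro A htA
        constructor
        · intro hiA
          exact hTle i0 (hfam i0 hi0f) A hiA htA hjT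
        · intro hjA
          have hsub := hTle j (hfam j hjf) A hjA htA
          rw [hTeq] at hsub
          exact hsub hi0T
      have hkey' : ∀ A : Finset (Fin n), ∑ k ∈ A, x k = (rk hfin A : ℝ) →
          (j ∈ A ↔ i0 ∈ A) := fun A h => (hkey A h).symm
      obtain ⟨t1, ht1, hmem1, hmlt1⟩ := perturb_pair hfin hx (fun h => hji0 h.symm) hi0 hj hkey
      obtain ⟨t2, ht2, hmem2, hmlt2⟩ := perturb_pair hfin hx hji0 hj hi0 hkey'
      have hc1 := ih _ hmem1 (by omega)
      have hc2 := ih _ hmem2 (by omega)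
      have ht12 : 0 < t1 + t2 := by linarith
      refine mem_conv_combo hc1 hc2 (a := t2 / (t1 + t2)) (b := t1 / (t1 + t2))
        (div_nonneg ht2.le ht12.le) (div_nonneg ht1.le ht12.le)
        (by field_simp; ring) ?_
      funext k
      show x k = _
      simp only [Pi.add_apply, Pi.smul_apply, smul_eq_mul, Function.update_apply]
      by_cases hkj : k = j <;> by_cases hki : k = i0
      · exact absurd (hkj.symm.trans hki) hji0
      · rw [if_pos hkj, if_neg hki, if_pos hkj, hkj]
        field_simp
        ring
      · rw [if_neg hkj, if_pos hki, if_pos hki, hki]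
        field_simp
        ring
      · rw [if_neg hkj, if_neg hki, if_neg hki, if_neg hkj]
        field_simp
        ring

theorem Rset_exchange (hne : P.Nonempty) (hfin : P.Finite)
    (hdown : ∀ u ∈ P, ∀ v, v ≤ u → v ∈ P)
    (hex : ∀ u ∈ P, ∀ v ∈ P, ∑ i, u i < ∑ i, v i → ∃ w ∈ P, u < w ∧ w ≤ u ⊔ v)
    {x y : Fin n → ℝ} (hx : x ∈ Rset hfin) (hy : y ∈ Rset hfin)
    (hlt : ∑ i, x i < ∑ i, y i) :
    ∃ w ∈ Rset hfin, x < w ∧ w ≤ x ⊔ y := by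
  classical
  set S : Finset (Fin n) := Finset.univ.filter (fun i => x i < y i) with hS
  have hScompl : ∀ i, i ∉ S → y i ≤ x i := by
    intro i hi
    rw [hS, Finset.mem_filter] at hi
    push_neg at hi
    exact hi (Finset.mem_univ i)
  by_cases hall : ∀ i ∈ S, ∃ A : Finset (Fin n), i ∈ A ∧ ∑ k ∈ A, x k = (rk hfin A : ℝ)
  · -- contradiction : build a big tight set containing S
    exfalso
    have hbig : ∀ s : Finset (Fin n),
        (∀ i ∈ s, ∃ A : Finset (Fin n), i ∈ A ∧ ∑ k ∈ A, x k = (rk hfin A : ℝ)) →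
        ∃ B : Finset (Fin n), (∑ k ∈ B, x k = (rk hfin B : ℝ)) ∧ s ⊆ B := by
      intro s
      induction s using Finset.induction_on with
      | empty =>
        intro _
        refine ⟨∅, ?_, Finset.empty_subset _⟩
        rw [rk_empty hfin]
        simp
      | @insert a s ha ih =>
        intro h
        obtain ⟨B, hBt, hsB⟩ := ih (fun i hi => h i (Finset.mem_insert_of_mem hi))
        obtain ⟨A, haA, hAt⟩ := h a (Finset.mem_insert_self _ _)
        have hsubm := rk_submod hne hfin hdown hex A B
        have hti := tight_inter_union hsubm hx hAt hBt
        refine ⟨A ∪ B, hti.1, ?_⟩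
        intro k hk
        rcases Finset.mem_insert.mp hk with rfl | hk'
        · exact Finset.mem_union_left _ haA
        · exact Finset.mem_union_right _ (hsB hk')
    obtain ⟨B, hBt, hSB⟩ := hbig S hall
    have h1 : ∑ i ∈ B, y i ≤ (rk hfin B : ℝ) := hy.2 B
    have h2 : ∑ i ∈ Bᶜ, y i ≤ ∑ i ∈ Bᶜ, x i := by
      refine Finset.sum_le_sum fun i hi => ?_
      have hiB : i ∉ B := by simpa using hi
      exact hScompl i (fun hiS => hiB (hSB hiS))
    have h3 := Finset.sum_add_sum_compl B y
    have h4 := Finset.sum_add_sum_compl B x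
    linarith
  · push_neg at hall
    obtain ⟨i, hiS, hslA⟩ := hall
    have hslack : ∀ A : Finset (Fin n), i ∈ A → ∑ k ∈ A, x k < (rk hfin A : ℝ) := by
      intro A hiA
      exact lt_of_le_of_ne (hx.2 A) (hslA A hiA)
    have hixy : x i < y i := by
      rw [hS, Finset.mem_filter] at hiS
      exact hiS.2
    -- build the move
    set C : Finset (Finset (Fin n)) := Finset.univ.powerset.filter (fun A => i ∈ A) with hC
    have hCmem : ∀ A : Finset (Fin n), i ∈ A → A ∈ C := fun A h => by
      rw [hC, Finset.mem_filter]
      exact ⟨Finset.mem_powerset.mpr (Finset.subset_univ _), h⟩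
    have hCne : C.Nonempty := ⟨{i}, hCmem _ (Finset.mem_singleton_self i)⟩
    set img := C.image (fun A => (rk hfin A : ℝ) - ∑ k ∈ A, x k) with himg
    have himgne : img.Nonempty := hCne.image _
    set s1 := img.min' himgne with hs1
    have hs1pos : 0 < s1 := by
      rw [hs1, Finset.lt_min'_iff]
      intro c hc
      rw [himg, Finset.mem_image] at hc
      obtain ⟨A, hAC, rfl⟩ := hc
      rw [hC, Finset.mem_filter] at hAC
      have := hslack A hAC.2
      linarith
    have hs1le : ∀ A : Finset (Fin n), i ∈ A → s1 ≤ (rk hfin A : ℝ) - ∑ k ∈ A, x k :=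
      fun A h => Finset.min'_le _ _ (Finset.mem_image_of_mem _ (hCmem A h))
    set t := min s1 (y i - x i) with ht
    have htpos : 0 < t := lt_min hs1pos (by linarith)
    refine ⟨Function.update x i (x i + t), ?_, ?_, ?_⟩
    · constructor
      · intro k
        rcases eq_or_ne k i with rfl | hk
        · rw [Function.update_self]
          have := hx.1 k
          linarith
        · rw [Function.update_of_ne hk]
          exact hx.1 k
      · intro A
        rw [sum_update_real]
        by_cases hiA : i ∈ A
        · rw [if_pos hiA]
          have h5 := hs1le A hiA
          have h6 : t ≤ s1 := min_le_left _ _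
          linarith
        · rw [if_neg hiA]
          have := hx.2 A
          linarith
    · rw [Pi.lt_def]
      constructor
      · intro k
        rcases eq_or_ne k i with rfl | hk
        · rw [Function.update_self]; linarith
        · rw [Function.update_of_ne hk]
      · exact ⟨i, by rw [Function.update_self]; linarith⟩
    · intro k
      rw [Pi.sup_apply]
      rcases eq_or_ne k i with rfl | hk
      · rw [Function.update_self]
        have h7 : t ≤ y k - x k := min_le_right _ _
        exact le_trans (by linarith) le_sup_right
      · rw [Function.update_of_ne hk]
        exact le_sup_left

end RealSide2

section Continuous

variable {n : ℕ}

theorem stuck_cont {Pc : Set (Fin n → ℝ)} (hcp : IsCompact Pc)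
    (hnn : ∀ u ∈ Pc, ∀ i, 0 ≤ u i)
    (hP1 : ∀ u ∈ Pc, ∀ v : Fin n → ℝ, (∀ i, 0 ≤ v i) → v ≤ u → v ∈ Pc)
    (hP2 : ∀ u ∈ Pc, ∀ v ∈ Pc, ∑ i, u i < ∑ i, v i → ∃ w ∈ Pc, u < w ∧ w ≤ u ⊔ v)
    {v : Fin n → ℝ} (hv : v ∈ Pc) (A : Finset (Fin n))
    (hA : ∀ j, j ∈ A ↔ ∀ z ∈ Pc, v ≤ z → z j = v j) :
    ∀ z ∈ Pc, ∑ i ∈ A, z i ≤ ∑ i ∈ A, v i := by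
  by_contra hcon
  push_neg at hcon
  obtain ⟨z₀, hz₀, hz₀A⟩ := hcon
  set δ := (∑ i ∈ A, z₀ i) - ∑ i ∈ A, v i with hδ
  have hδpos : 0 < δ := by rw [hδ]; linarith
  set Z := Pc ∩ {z | (∑ i ∈ A, v i) + δ ≤ ∑ i ∈ A, z i} with hZ
  have hsumcont : Continuous fun z : Fin n → ℝ => ∑ i ∈ A, z i :=
    continuous_finset_sum _ fun i _ => continuous_apply i
  have hsumcontU : Continuous fun z : Fin n → ℝ => ∑ i, z i :=
    continuous_finset_sum _ fun i _ => continuous_apply i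
  have hZcp : IsCompact Z := hcp.inter_right (isClosed_le continuous_const hsumcont)
  have hZne : Z.Nonempty := ⟨z₀, hz₀, by
    rw [Set.mem_setOf_eq, hδ]; linarith⟩
  have hΦcont : Continuous fun z : Fin n → ℝ => ∑ j, max (z j - v j) 0 :=
    continuous_finset_sum _ fun j _ =>
      ((continuous_apply j).sub continuous_const).max continuous_const
  obtain ⟨z₁, hz₁Z, hz₁min⟩ := hZcp.exists_isMinOn hZne hΦcont.continuousOn
  set Z' := Z ∩ {z | (∑ j, max (z j - v j) 0) ≤ ∑ j, max (z₁ j - v j) 0} with hZ'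
  have hZ'cp : IsCompact Z' := hZcp.inter_right (isClosed_le hΦcont continuous_const)
  have hZ'ne : Z'.Nonempty := ⟨z₁, hz₁Z, by
    simp only [Set.mem_setOf_eq]
    exact le_refl _⟩
  obtain ⟨z, hzZ', hzmax⟩ := hZ'cp.exists_isMaxOn hZ'ne hsumcontU.continuousOn
  obtain ⟨⟨hzPc, hzA⟩, hzΦ⟩ := hzZ'
  have hzA' : (∑ i ∈ A, v i) + δ ≤ ∑ i ∈ A, z i := hzA
  have hzΦ' : ∀ w ∈ Z, (∑ j, max (z j - v j) 0) ≤ ∑ j, max (w j - v j) 0 :=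
    fun w hw => le_trans hzΦ (hz₁min hw)
  -- fact 1 : off A, z is dominated by v
  have fact1 : ∀ j, j ∉ A → z j ≤ v j := by
    intro j hj
    by_contra hgt
    push_neg at hgt
    have hz'P : Function.update z j (v j) ∈ Pc := by
      refine hP1 z hzPc _ (fun k => ?_) (fun k => ?_)
      · rw [Function.update_apply]
        split
        · exact hnn v hv j
        · exact hnn z hzPc k
      · rw [Function.update_apply]
        split
        · next h => subst h; linarith
        · exact le_refl _
    have hz'A : ∑ i ∈ A, Function.update z j (v j) i = ∑ i ∈ A, z i :=
      sum_update_not_mem hj _ _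
    have hz'Z : Function.update z j (v j) ∈ Z :=
      ⟨hz'P, by rw [Set.mem_setOf_eq, hz'A]; exact hzA'⟩
    have hltΦ : (∑ k, max (Function.update z j (v j) k - v k) 0)
        < ∑ k, max (z k - v k) 0 := by
      apply Finset.sum_lt_sum
      · intro k _
        rw [Function.update_apply]
        split
        · next h =>
            subst h
            rw [sub_self, max_self]
            exact le_max_right _ _
        · exact le_refl _
      · refine ⟨j, Finset.mem_univ j, ?_⟩
        rw [Function.update_self, sub_self, max_self]
        exact lt_of_lt_of_le (by linarith : (0:ℝ) < z j - v j) (le_max_left _ _)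
    exact absurd hltΦ (not_lt.mpr (hzΦ' _ hz'Z))
  -- common finishing move
  have finish : ∀ w, w ∈ Pc → (∀ k, z k ≤ w k) → (∃ l, z l < w l) →
      (∀ k, w k ≤ max (z k) (v k)) → False := by
    intro w hw hzw hstrict hbound
    obtain ⟨l, hl⟩ := hstrict
    have hΦw : (∑ k, max (w k - v k) 0) ≤ ∑ k, max (z k - v k) 0 := by
      refine Finset.sum_le_sum fun k _ => ?_
      refine max_le ?_ (le_max_right _ _)
      rcases le_total (z k) (v k) with h4 | h4
      · have h5 := hbound k
        rw [max_eq_right h4] at h5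
        exact le_trans (by linarith : w k - v k ≤ 0) (le_max_right _ _)
      · have h5 := hbound k
        rw [max_eq_left h4] at h5
        exact le_trans (by linarith : w k - v k ≤ z k - v k) (le_max_left _ _)
    have hwZ : w ∈ Z :=
      ⟨hw, by
        rw [Set.mem_setOf_eq]
        exact le_trans hzA' (Finset.sum_le_sum fun i _ => hzw i)⟩
    have hwZ' : w ∈ Z' := ⟨hwZ, by exact le_trans hΦw hzΦ⟩
    have hsums : ∑ i, z i < ∑ i, w i :=
      Finset.sum_lt_sum (fun i _ => hzw i) ⟨l, Finset.mem_univ l, hl⟩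
    have h9 := hzmax hwZ'
    rw [Set.mem_setOf_eq] at h9
    linarith
  rcases lt_trichotomy (∑ i, z i) (∑ i, v i) with hlt | heq | hgt
  · -- |z| < |v|
    obtain ⟨w, hw, hzw, hwle⟩ := hP2 z hzPc v hv hlt
    obtain ⟨hle, l, hl⟩ := Pi.lt_def.mp hzw
    refine finish w hw (fun k => hle k) ⟨l, hl⟩ (fun k => ?_)
    have h6 := hwle k
    rw [Pi.sup_apply] at h6
    exact h6
  · -- |z| = |v|
    have hAcsum : ∑ i ∈ Aᶜ, z i < ∑ i ∈ Aᶜ, v i := by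
      have h1 := Finset.sum_add_sum_compl A z
      have h2 := Finset.sum_add_sum_compl A v
      linarith
    obtain ⟨i, hiA, hi⟩ := Finset.exists_lt_of_sum_lt hAcsum
    have hiA' : i ∉ A := by simpa using hiA
    have hex_y : ∃ y ∈ Pc, v ≤ y ∧ y i ≠ v i := by
      by_contra hcy
      push_neg at hcy
      exact hiA' ((hA i).mpr hcy)
    obtain ⟨y, hyPc, hvy, hyne⟩ := hex_y
    have hyi : v i < y i := lt_of_le_of_ne (hvy i) (Ne.symm hyne)
    have htyPc : Function.update v i (y i) ∈ Pc := by
      refine hP1 y hyPc _ (fun k => ?_) (fun k => ?_)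
      · rw [Function.update_apply]
        split
        · exact hnn y hyPc i
        · exact hnn v hv k
      · rw [Function.update_apply]
        split
        · next h => subst h; exact le_refl _
        · exact hvy k
    have htysum : ∑ k, v k < ∑ k, Function.update v i (y i) k := by
      have := sum_update_mem (Finset.mem_univ i) v (y i)
      linarith
    obtain ⟨w, hwPc, hzw, hwle⟩ := hP2 z hzPc _ htyPc (by linarith)
    obtain ⟨hle, l, hl⟩ := Pi.lt_def.mp hzw
    have hwbound : ∀ k, k ≠ i → w k ≤ max (z k) (v k) := by
      intro k hk
      have h6 := hwle k
      rw [Pi.sup_apply, Function.update_of_ne hk] at h6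
      exact h6
    have hw'Pc : (fun k => min (w k) (max (z k) (v k))) ∈ Pc := by
      refine hP1 w hwPc _ (fun k => ?_) (fun k => ?_)
      · exact le_min (le_trans (hnn z hzPc k) (hle k))
          (le_trans (hnn z hzPc k) (le_max_left _ _))
      · exact min_le_left _ _
    have hzw' : ∀ k, z k ≤ min (w k) (max (z k) (v k)) := fun k =>
      le_min (hle k) (le_max_left _ _)
    have hstrict : z l < min (w l) (max (z l) (v l)) := by
      rcases eq_or_ne l i with rfl | hli
      · exact lt_min hl (lt_max_iff.mpr (Or.inr hi))
      · exact lt_min hl (lt_of_lt_of_le hl (hwbound l hli))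
    exact finish _ hw'Pc hzw' ⟨l, hstrict⟩ (fun k => min_le_right _ _)
  · -- |z| > |v|
    obtain ⟨w, hw, hvw, hwle⟩ := hP2 v hv z hzPc hgt
    obtain ⟨hle, j, hj⟩ := Pi.lt_def.mp hvw
    have hzj : v j < z j := by
      have h6 := hwle j
      rw [Pi.sup_apply] at h6
      change w j ≤ max (v j) (z j) at h6
      by_contra h7
      push_neg at h7
      rw [max_eq_left h7] at h6
      linarith
    have hjA : j ∈ A := by
      by_contra hjA
      exact absurd (fact1 j hjA) (not_le.mpr hzj)
    have h8 := ((hA j).mp hjA) w hw (fun k => hle k)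
    linarith

end Continuous

section Assembly

variable {n : ℕ} {P : Set (Fin n → ℕ)}

theorem toReal_injective : Function.Injective (toReal (n := n)) := fun u v h =>
  funext fun i => Nat.cast_injective (congrFun h i)

theorem sum_toReal (u : Fin n → ℕ) (A : Finset (Fin n)) :
    ∑ k ∈ A, toReal u k = ((∑ k ∈ A, u k : ℕ) : ℝ) := by
  rw [Nat.cast_sum]
  rfl

theorem main_thm (hne : P.Nonempty) (hfin : P.Finite) :
    IsDiscretePolymatroid P ↔
      (IsIntegralPolymatroid (convexHull ℝ (toReal '' P)) ∧
        {x ∈ convexHull ℝ (toReal '' P) | ∀ i, ∃ z : ℤ, x i = (z : ℝ)} =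
          toReal '' P) := by
  constructor
  · rintro ⟨hne', hfin', hdown, hex⟩
    have hRQ : convexHull ℝ (toReal '' P) = Rset hfin :=
      Set.Subset.antisymm (conv_subset_Rset hfin) (Rset_subset_conv hne hfin hdown hex)
    obtain ⟨u₀, hu₀⟩ := id hne
    refine ⟨⟨⟨⟨toReal u₀, subset_convexHull ℝ _ ⟨u₀, hu₀, rfl⟩⟩,
      (hfin.image toReal).isCompact_convexHull ℝ, ?_, ?_, ?_⟩, ?_⟩, ?_⟩
    · intro x hx i
      rw [hRQ] at hx
      exact hx.1 i
    · intro x hx y hy0 hyx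
      rw [hRQ] at hx ⊢
      exact ⟨hy0, fun A => le_trans (Finset.sum_le_sum fun i _ => hyx i) (hx.2 A)⟩
    · intro x hx y hy hlt
      rw [hRQ] at hx hy
      obtain ⟨w, hw, h1, h2⟩ := Rset_exchange hne hfin hdown hex hx hy hlt
      exact ⟨w, by rw [hRQ]; exact hw, h1, h2⟩
    · intro x hx i
      have hxQ : x ∈ toReal '' P := extremePoints_convexHull_subset hx
      obtain ⟨u, hu, rfl⟩ := hxQ
      exact ⟨(u i : ℤ), by simp [toReal]⟩
    · ext x
      constructor
      · rintro ⟨hxc, hxint⟩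
        rw [hRQ] at hxc
        exact int_mem hne hfin hdown hex hxc hxint
      · intro hxQ
        refine ⟨subset_convexHull ℝ _ hxQ, ?_⟩
        obtain ⟨u, hu, rfl⟩ := hxQ
        intro i
        exact ⟨(u i : ℤ), by simp [toReal]⟩
  · rintro ⟨⟨⟨hPne, hPcp, hPnn, hP1, hP2⟩, hext⟩, hlat⟩
    refine ⟨hne, hfin, ?_, ?_⟩
    · intro u hu v hvu
      have h1 : toReal u ∈ convexHull ℝ (toReal '' P) :=
        subset_convexHull ℝ _ ⟨u, hu, rfl⟩
      have h2 : toReal v ∈ convexHull ℝ (toReal '' P) :=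
        hP1 _ h1 _ (fun i => Nat.cast_nonneg _) (fun i => Nat.cast_le.mpr (hvu i))
      have h3 : toReal v ∈ {x ∈ convexHull ℝ (toReal '' P) | ∀ i, ∃ z : ℤ, x i = (z : ℝ)} :=
        ⟨h2, fun i => ⟨(v i : ℤ), by simp [toReal]⟩⟩
      rw [hlat] at h3
      obtain ⟨v', hv', hvv⟩ := h3
      rwa [← toReal_injective hvv]
    · intro u hu v hv hlt
      classical
      by_cases hfound : ∃ i, u i < v i ∧ bump u i ∈ P
      · obtain ⟨i, h1, h2⟩ := hfound
        refine ⟨bump u i, h2, ?_, ?_⟩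
        · rw [Pi.lt_def]
          refine ⟨le_bump u i, i, ?_⟩
          rw [bump_apply, if_pos rfl]
          exact Nat.lt_succ_self _
        · intro k
          rw [Pi.sup_apply, bump_apply]
          split
          · next h =>
              subst h
              exact le_trans (by omega : u k + 1 ≤ v k) le_sup_right
          · exact le_sup_left
      · exfalso
        push_neg at hfound
        have huC : toReal u ∈ convexHull ℝ (toReal '' P) :=
          subset_convexHull ℝ _ ⟨u, hu, rfl⟩
        have hvC : toReal v ∈ convexHull ℝ (toReal '' P) :=
          subset_convexHull ℝ _ ⟨v, hv, rfl⟩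
        have hstuckcoord : ∀ i, u i < v i →
            ∀ z ∈ convexHull ℝ (toReal '' P), toReal u ≤ z → z i = toReal u i := by
          intro i hi
          have hbump : bump u i ∉ P := hfound i hi
          have hclosed : IsClosed {z : Fin n → ℝ | toReal u ≤ z} := by
            have hsetek : {z : Fin n → ℝ | toReal u ≤ z}
                = ⋂ k, {z : Fin n → ℝ | toReal u k ≤ z k} := by
              ext z
              simp [Pi.le_def, Set.mem_iInter]
            rw [hsetek]
            exact isClosed_iInter fun k => isClosed_le continuous_const (continuous_apply k)
          have hTne : (convexHull ℝ (toReal '' P) ∩ {z | toReal u ≤ z}).Nonempty :=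
            ⟨toReal u, huC, by rw [Set.mem_setOf_eq]⟩
          obtain ⟨zs, hzsT, hzsmax⟩ := (hPcp.inter_right hclosed).exists_isMaxOn
            hTne (continuous_apply i).continuousOn
          obtain ⟨hzsC, hzsge⟩ := hzsT
          have hzsge' : ∀ k, toReal u k ≤ zs k := hzsge
          have hnotbig : ¬ (toReal u i + 1 ≤ zs i) := by
            intro hbig
            have hble : toReal (bump u i) ≤ zs := by
              intro k
              rcases eq_or_ne k i with rfl | hk
              · show ((bump u k k : ℕ) : ℝ) ≤ zs k
                rw [bump_apply, if_pos rfl]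
                push_cast
                exact hbig
              · show ((bump u i k : ℕ) : ℝ) ≤ zs k
                rw [bump_apply, if_neg hk]
                exact hzsge' k
            have hbconv := hP1 zs hzsC _ (fun k => Nat.cast_nonneg _) hble
            have hbmem : toReal (bump u i) ∈
                {x ∈ convexHull ℝ (toReal '' P) | ∀ i, ∃ z : ℤ, x i = (z : ℝ)} :=
              ⟨hbconv, fun k => ⟨(bump u i k : ℤ), by simp [toReal]⟩⟩
            rw [hlat] at hbmem
            obtain ⟨w', hw', hww⟩ := hbmem
            exact hbump (by rwa [← toReal_injective hww])
          have hzslt : zs i < toReal u i + 1 := lt_of_not_ge hnotbig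
          rcases eq_or_lt_of_le (hzsge' i) with hcz | hcpos
          · intro z hz hle2
            have h9 := hzsmax (Set.mem_inter hz hle2)
            rw [Set.mem_setOf_eq] at h9
            exact le_antisymm (hcz ▸ h9) (hle2 i)
          · exfalso
            set p := Function.update (toReal u) i (zs i) with hp
            have hpval : p i = zs i := by rw [hp, Function.update_self]
            have hpC : p ∈ convexHull ℝ (toReal '' P) := by
              refine hP1 zs hzsC _ (fun k => ?_) (fun k => ?_)
              · rw [hp, Function.update_apply]
                split
                · exact le_trans (Nat.cast_nonneg _) (hzsge' i)
                · exact Nat.cast_nonneg _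
              · rw [hp, Function.update_apply]
                split
                · next h => subst h; exact le_refl _
                · exact hzsge' k
            have hiAp : ∀ z ∈ convexHull ℝ (toReal '' P), p ≤ z → z i = p i := by
              intro z hz hpz
              have hzge : toReal u ≤ z := by
                intro k
                rcases eq_or_ne k i with rfl | hk
                · exact le_trans (hzsge' k) (by rw [← hpval]; exact hpz k)
                · have h10 := hpz k
                  rw [hp, Function.update_of_ne hk] at h10
                  exact h10
              have h9 := hzsmax (Set.mem_inter hz hzge)
              rw [Set.mem_setOf_eq] at h9
              rw [hpval]
              exact le_antisymm h9 (by rw [← hpval]; exact hpz i)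
            set Ap := Finset.univ.filter
              (fun j => ∀ z ∈ convexHull ℝ (toReal '' P), p ≤ z → z j = p j) with hApdef
            have hiApmem : i ∈ Ap := by
              rw [hApdef, Finset.mem_filter]
              exact ⟨Finset.mem_univ _, hiAp⟩
            have hstuckAp := stuck_cont hPcp hPnn hP1 hP2 hpC Ap
              (fun j => by simp [hApdef])
            obtain ⟨uA, huA, huAeq⟩ := rk_attained hne hfin Ap
            have h8 := hstuckAp (toReal uA) (subset_convexHull ℝ _ ⟨uA, huA, rfl⟩)
            have hub := (conv_subset_Rset hfin hpC).2 Ap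
            have hpsum : ∑ k ∈ Ap, p k = (∑ k ∈ Ap, toReal u k) + (zs i - toReal u i) := by
              rw [hp]
              have := sum_update_mem hiApmem (toReal u) (zs i)
              linarith
            have hA1 : ((∑ k ∈ Ap, uA k : ℕ) : ℝ) = (rk hfin Ap : ℝ) := by
              exact_mod_cast huAeq
            have hA2 := sum_toReal uA Ap
            have hA3 := sum_toReal u Ap
            have hlow : (rk hfin Ap : ℝ) ≤ ∑ k ∈ Ap, p k := by
              rw [← hA1, ← hA2]
              exact h8
            have hb1 : ((∑ k ∈ Ap, u k : ℕ) : ℝ) < (rk hfin Ap : ℝ) := by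
              rw [← hA3] at *
              linarith
            have hb2 : (rk hfin Ap : ℝ) < ((∑ k ∈ Ap, u k : ℕ) : ℝ) + 1 := by
              rw [← hA3] at *
              linarith
            have hn1 : (∑ k ∈ Ap, u k) < rk hfin Ap := by exact_mod_cast hb1
            have hn2 : rk hfin Ap < (∑ k ∈ Ap, u k) + 1 := by exact_mod_cast hb2
            omega
        set A := Finset.univ.filter
          (fun j => ∀ z ∈ convexHull ℝ (toReal '' P), toReal u ≤ z → z j = toReal u j)
          with hAdef
        have hstuckA := stuck_cont hPcp hPnn hP1 hP2 huC A (fun j => by simp [hAdef])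
        have h8 := hstuckA (toReal v) hvC
        have hAle : (∑ k ∈ A, v k) ≤ ∑ k ∈ A, u k := by
          have h9 := sum_toReal v A
          have h10 := sum_toReal u A
          rw [h9, h10] at h8
          exact_mod_cast h8
        have hoffA : ∀ k, k ∉ A → v k ≤ u k := by
          intro k hk
          by_contra hgt
          push_neg at hgt
          refine hk ?_
          rw [hAdef, Finset.mem_filter]
          exact ⟨Finset.mem_univ _, hstuckcoord k hgt⟩
        have h11 := Finset.sum_add_sum_compl A u
        have h12 := Finset.sum_add_sum_compl A v
        have h13 : (∑ k ∈ Aᶜ, v k) ≤ ∑ k ∈ Aᶜ, u k :=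
          Finset.sum_le_sum fun k hk => hoffA k (by simpa using hk)
        omega

end Assembly


/-- Theorem 3.4: a nonempty finite set `P ⊆ ℤ_+^n` is a discrete polymatroid
if and only if `conv(P) ⊆ ℝ_+^n` is an integral polymatroid with
`conv(P) ∩ ℤ^n = P`. -/
theorem discretePolymatroid_iff_convexHull_integralPolymatroid {n : ℕ}
    (P : Set (Fin n → ℕ)) (hne : P.Nonempty) (hfin : P.Finite) :
    IsDiscretePolymatroid P ↔
      (IsIntegralPolymatroid (convexHull ℝ (toReal '' P)) ∧
        {x ∈ convexHull ℝ (toReal '' P) | ∀ i, ∃ z : ℤ, x i = (z : ℝ)} =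
          toReal '' P) := by
  exact main_thm hne hfin
end

section
/- If u and v are bases of a discrete polymatroid P ⊆ ℤ_+^n, then for each i ∈ [n] with u(i) > v(i) there is j ∈ [n] with u(j) < v(j) such that both u − ε_i + ε_j and v − ε_j + ε_i are bases of P (the symmetric exchange theorem). -/
open Set

/-- number of elements of `I` in column `k` -/
noncomputable def dpmCnt {n N : ℕ} (I : Set (Fin n × Fin N)) (k : Fin n) : ℕ :=
  {s : Fin N | (k, s) ∈ I}.ncard

lemma dpmCnt_mono {n N : ℕ} {I J : Set (Fin n × Fin N)} (h : I ⊆ J) :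
    dpmCnt I ≤ dpmCnt J := fun k =>
  ncard_le_ncard (fun s hs => h hs) (toFinite _)

lemma dpmCnt_image {n N : ℕ} (I : Set (Fin n × Fin N)) (k : Fin n) :
    (fun s : Fin N => (k, s)) '' {s : Fin N | (k, s) ∈ I} = I ∩ {p | p.1 = k} := by
  ext ⟨a, b⟩
  simp only [mem_image, mem_setOf_eq, mem_inter_iff, Prod.mk.injEq]
  constructor
  · rintro ⟨s, hs, rfl, rfl⟩; exact ⟨hs, rfl⟩
  · rintro ⟨h, rfl⟩; exact ⟨b, h, rfl, rfl⟩

lemma dpmCnt_eq_inter {n N : ℕ} (I : Set (Fin n × Fin N)) (k : Fin n) :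
    dpmCnt I k = (I ∩ {p | p.1 = k}).ncard := by
  rw [← dpmCnt_image]
  exact (ncard_image_of_injective _ (fun a b h => congrArg Prod.snd h)).symm

lemma dpmCnt_sum {n N : ℕ} (I : Set (Fin n × Fin N)) :
    ∑ k, dpmCnt I k = I.ncard := by
  classical
  have hfin := toFinite I
  rw [ncard_eq_toFinset_card I hfin]
  rw [Finset.card_eq_sum_card_fiberwise (f := Prod.fst) (t := Finset.univ)
    (fun x _ => Finset.mem_univ _)]
  refine Finset.sum_congr rfl fun k _ => ?_
  rw [dpmCnt_eq_inter]
  rw [ncard_eq_toFinset_card _ ((toFinite I).subset inter_subset_left)]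
  congr 1
  ext p
  simp only [Set.Finite.mem_toFinset, Finset.mem_filter]
  exact Iff.rfl

lemma dpmCnt_le {n N : ℕ} (I : Set (Fin n × Fin N)) (k : Fin n) :
    dpmCnt I k ≤ I.ncard := by
  rw [dpmCnt_eq_inter]
  exact ncard_le_ncard inter_subset_left (toFinite _)

lemma dpmCnt_insert {n N : ℕ} {I : Set (Fin n × Fin N)} {e : Fin n × Fin N} (he : e ∉ I) :
    dpmCnt (insert e I) = dpmCnt I + Pi.single e.1 1 := by
  obtain ⟨a, b⟩ := e
  funext k
  simp only [Pi.add_apply]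
  by_cases hak : a = k
  · subst hak
    have : {s : Fin N | (a, s) ∈ insert (a, b) I} = insert b {s : Fin N | (a, s) ∈ I} := by
      ext s; simp [Prod.ext_iff]
    rw [dpmCnt, this, ncard_insert_of_notMem (show b ∉ {s : Fin N | (a,s) ∈ I} from fun h => he h) (toFinite _)]
    simp [dpmCnt]
  · have : {s : Fin N | (k, s) ∈ insert (a, b) I} = {s : Fin N | (k, s) ∈ I} := by
      ext s
      simp only [mem_insert_iff, mem_setOf_eq, Prod.mk.injEq, or_iff_right_iff_imp]
      rintro ⟨rfl, rfl⟩; exact absurd rfl hak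
    rw [dpmCnt, this, Pi.single_eq_of_ne (Ne.symm hak)]
    rfl

lemma dpmCnt_diff {n N : ℕ} {I : Set (Fin n × Fin N)} {e : Fin n × Fin N} (he : e ∈ I) :
    dpmCnt (I \ {e}) + Pi.single e.1 1 = dpmCnt I := by
  have h1 : e ∉ I \ {e} := fun h => h.2 rfl
  rw [← dpmCnt_insert h1, insert_diff_singleton, insert_eq_of_mem he]

/-- the prefix set representing a vector -/
noncomputable def dpmPre {n N : ℕ} (w : Fin n → ℕ) : Set (Fin n × Fin N) := {p | (p.2 : ℕ) < w p.1}

lemma dpmCnt_pre {n N : ℕ} {w : Fin n → ℕ} (hw : ∀ k, w k ≤ N) :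
    dpmCnt (dpmPre (N := N) w) = w := by
  funext k
  have h1 : {s : Fin N | (k, s) ∈ dpmPre (N := N) w} = range (Fin.castLE (hw k)) := by
    ext s
    simp only [dpmPre, mem_setOf_eq, mem_range]
    constructor
    · intro h; exact ⟨⟨(s : ℕ), h⟩, rfl⟩
    · rintro ⟨t, rfl⟩; exact t.2
  rw [dpmCnt, h1, ← image_univ, ncard_image_of_injective _ (Fin.castLE_injective _),
    ncard_univ, Nat.card_eq_fintype_card, Fintype.card_fin]

/-- Symmetric exchange for bases of a finite matroid. -/
theorem matroid_symmetric_exchange {α : Type*} {M : Matroid α} [M.Finite] {B₁ B₂ : Set α}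
    (hB₁ : M.IsBase B₁) (hB₂ : M.IsBase B₂) {x : α} (hx₁ : x ∈ B₁) (hx₂ : x ∉ B₂) :
    ∃ y ∈ B₂ \ B₁, M.IsBase (insert y (B₁ \ {x})) ∧ M.IsBase (insert x (B₂ \ {y})) := by
  classical
  set S : Set α := {y ∈ B₂ | M.IsBase (insert x (B₂ \ {y}))} with hS
  have hxE : x ∈ M.E := hB₁.subset_ground hx₁
  -- if y ∈ B₂ is not in S then x is in the closure of B₂ \ {y}
  have hyS : ∀ y ∈ B₂, y ∉ S → x ∈ M.closure (B₂ \ {y}) := by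
    intro y hy hyS
    by_contra hxc
    have h1 : M.Indep (B₂ \ {y}) := hB₂.indep.subset diff_subset
    have hind : M.Indep (insert x (B₂ \ {y})) := by
      rw [h1.insert_indep_iff_of_notMem (fun h => hx₂ h.1)]
      exact ⟨hxE, hxc⟩
    have hxy : x ≠ y := fun h => hx₂ (h ▸ hy)
    rw [insert_diff_singleton_comm hxy] at hind
    have := hB₂.exchange_isBase_of_indep' hy hx₂ hind
    rw [← insert_diff_singleton_comm hxy] at this
    exact hyS ⟨hy, this⟩
  -- x ∈ closure (B₂ \ F) for every finite F ⊆ B₂ \ S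
  have key : ∀ F : Set α, F.Finite → F ⊆ B₂ \ S → x ∈ M.closure (B₂ \ F) := by
    intro F hF
    refine Set.Finite.induction_on (motive := fun F _ => F ⊆ B₂ \ S → x ∈ M.closure (B₂ \ F)) F hF ?_ ?_
    · intro _
      rw [diff_empty]
      have := hB₂.closure_eq
      rw [this]; exact hxE
    · intro a s has hsfin IH hins
      have ha : a ∈ B₂ \ S := hins (mem_insert _ _)
      have hsub : s ⊆ B₂ \ S := (subset_insert _ _).trans hins
      have hIH := IH hsub
      have hrw : B₂ \ s = insert a (B₂ \ insert a s) := by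
        ext z
        simp only [mem_diff, mem_insert_iff]
        constructor
        · rintro ⟨hz, hzs⟩
          by_cases hza : z = a
          · exact Or.inl hza
          · exact Or.inr ⟨hz, by tauto⟩
        · rintro (rfl | ⟨hz, hzs⟩)
          · exact ⟨ha.1, has⟩
          · exact ⟨hz, fun h => hzs (Or.inr h)⟩
      by_contra hxc
      rw [hrw] at hIH
      have hmem := Matroid.mem_closure_insert hxc hIH
      have hxa : x ∈ M.closure (B₂ \ {a}) := hyS a ha.1 ha.2
      have hsub2 : insert x (B₂ \ insert a s) ⊆ insert x (B₂ \ {a}) := by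
        apply insert_subset_insert
        exact diff_subset_diff_right (by simp)
      have : a ∈ M.closure (B₂ \ {a}) := by
        have h2 := (M.closure_subset_closure hsub2) hmem
        rwa [Matroid.closure_insert_eq_of_mem_closure hxa] at h2
      exact hB₂.indep.notMem_closure_sdiff_of_mem ha.1 this
  have hBS : (B₂ \ S).Finite := (M.ground_finite.subset hB₂.subset_ground).subset diff_subset
  have hxS : x ∈ M.closure S := by
    have := key (B₂ \ S) hBS Subset.rfl
    rwa [diff_diff_cancel_left (sep_subset _ _)] at this
  -- now find y ∈ S \ B₁ with insert y (B₁ \ {x}) independent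
  have h1 : M.Indep (B₁ \ {x}) := hB₁.indep.subset diff_subset
  have hex : ∃ y ∈ S, y ∉ B₁ ∧ M.Indep (insert y (B₁ \ {x})) := by
    by_contra hcon
    push_neg at hcon
    have hScl : S ⊆ M.closure (B₁ \ {x}) := by
      intro y hy
      by_cases hyB₁ : y ∈ B₁
      · have hyx : y ≠ x := fun h => hx₂ (h ▸ hy.1)
        exact M.mem_closure_of_mem ⟨hyB₁, hyx⟩ (diff_subset.trans hB₁.subset_ground)
      · have hni := hcon y hy hyB₁
        have hyE : y ∈ M.E := hB₂.subset_ground hy.1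
        by_contra hycl
        exact hni ((h1.insert_indep_iff_of_notMem (fun h => hyB₁ h.1)).2 ⟨hyE, hycl⟩)
    have : x ∈ M.closure (B₁ \ {x}) :=
      M.closure_subset_closure_of_subset_closure hScl hxS
    exact hB₁.indep.notMem_closure_sdiff_of_mem hx₁ this
  obtain ⟨y, hy, hyB₁, hind⟩ := hex
  exact ⟨y, ⟨hy.1, hyB₁⟩, hB₁.exchange_isBase_of_indep hyB₁ hind, hy.2⟩

/-- A discrete polymatroid on the ground set `[n]`. -/
lemma dpm_aug {n : ℕ} {P : Set (Fin n → ℕ)} (hP : IsDiscretePolymatroid P)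
    {a b : Fin n → ℕ} (ha : a ∈ P) (hb : b ∈ P) (h : ∑ i, a i < ∑ i, b i) :
    ∃ k, a k < b k ∧ a + Pi.single k 1 ∈ P := by
  obtain ⟨-, -, hD1, hD2⟩ := hP
  obtain ⟨w, hw, haw, hwle⟩ := hD2 a ha b hb h
  obtain ⟨hle, hne⟩ := lt_iff_le_and_ne.1 haw
  have hk : ∃ k, a k < w k := by
    by_contra hc; push_neg at hc
    exact hne (le_antisymm hle hc)
  obtain ⟨k, hk⟩ := hk
  have hkb : a k < b k := by
    have h2 := hwle k
    simp only [Pi.sup_apply, le_sup_iff] at h2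
    omega
  refine ⟨k, hkb, hD1 w hw _ (fun m => ?_)⟩
  by_cases hm : m = k
  · subst hm
    simp only [Pi.add_apply, Pi.single_eq_same]
    omega
  · simp only [Pi.add_apply, Pi.single_eq_of_ne hm, add_zero]
    exact hle m

lemma pi_eq_tsub {n : ℕ} {f g h : Fin n → ℕ} (e : f + g = h) : f = h - g := by
  funext k
  have h2 := congrFun e k
  simp only [Pi.add_apply] at h2
  simp only [Pi.sub_apply]
  omega

noncomputable def dpmMatroid {n : ℕ} (P : Set (Fin n → ℕ)) (hP : IsDiscretePolymatroid P)
    (N : ℕ) : Matroid (Fin n × Fin N) :=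
  (IndepMatroid.ofFinite finite_univ (fun I => dpmCnt I ∈ P)
    (by
      have h0 : dpmCnt (∅ : Set (Fin n × Fin N)) = 0 := by
        funext k; simp [dpmCnt]
      show dpmCnt (∅ : Set (Fin n × Fin N)) ∈ P
      rw [h0]
      obtain ⟨⟨a, ha⟩, -, hD1, -⟩ := hP
      exact hD1 a ha 0 (fun k => Nat.zero_le _))
    (fun I J hJ hIJ => hP.2.2.1 _ hJ _ (dpmCnt_mono hIJ))
    (fun I J hI hJ hIJ => by
      have hsum : ∑ k, dpmCnt I k < ∑ k, dpmCnt J k := by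
        rw [dpmCnt_sum, dpmCnt_sum]; exact hIJ
      obtain ⟨k, hk, hkP⟩ := dpm_aug hP hI hJ hsum
      have hs : ∃ s : Fin N, (k, s) ∈ J ∧ (k, s) ∉ I := by
        by_contra hc; push_neg at hc
        have hsub : {s : Fin N | (k, s) ∈ J} ⊆ {s | (k, s) ∈ I} := fun s hs => hc s hs
        have := ncard_le_ncard hsub (toFinite _)
        rw [show {s : Fin N | (k,s) ∈ J}.ncard = dpmCnt J k from rfl,
          show {s : Fin N | (k,s) ∈ I}.ncard = dpmCnt I k from rfl] at this
        omega
      obtain ⟨s, hsJ, hsI⟩ := hs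
      exact ⟨(k, s), hsJ, hsI, by show dpmCnt (insert (k,s) I) ∈ P; rw [dpmCnt_insert hsI]; exact hkP⟩)
    (fun I _ => subset_univ _)).matroid

lemma dpmMatroid_indep {n : ℕ} {P : Set (Fin n → ℕ)} {hP : IsDiscretePolymatroid P}
    {N : ℕ} {I : Set (Fin n × Fin N)} :
    (dpmMatroid P hP N).Indep I ↔ dpmCnt I ∈ P := by
  simp [dpmMatroid]

lemma dpmMatroid_base_pre {n N : ℕ} {P : Set (Fin n → ℕ)} (hP : IsDiscretePolymatroid P)
    {w : Fin n → ℕ} (hw : IsBaseOf P w) (hwN : ∀ k, w k ≤ N) :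
    (dpmMatroid P hP N).IsBase (dpmPre (N := N) w) := by
  have hind : (dpmMatroid P hP N).Indep (dpmPre (N := N) w) := by
    rw [dpmMatroid_indep, dpmCnt_pre hwN]; exact hw.1
  refine hind.isBase_of_maximal (fun J hJ hsub => ?_)
  rw [dpmMatroid_indep] at hJ
  have hle : dpmCnt (dpmPre (N := N) w) ≤ dpmCnt J := dpmCnt_mono hsub
  rw [dpmCnt_pre hwN] at hle
  have heq : dpmCnt J = w := hw.2 _ hJ hle
  refine Set.eq_of_subset_of_ncard_le hsub (le_of_eq ?_) (toFinite _)
  rw [← dpmCnt_sum, ← dpmCnt_sum, heq, dpmCnt_pre hwN]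

lemma dpmMatroid_cobase {n N : ℕ} {P : Set (Fin n → ℕ)} (hP : IsDiscretePolymatroid P)
    {I : Set (Fin n × Fin N)} (hI : (dpmMatroid P hP N).IsBase I)
    (hcard : I.ncard < N) : IsBaseOf P (dpmCnt I) := by
  have hind : dpmCnt I ∈ P := dpmMatroid_indep.1 hI.indep
  refine ⟨hind, fun z hz hle => ?_⟩
  by_contra hne
  have hk : ∃ k, dpmCnt I k < z k := by
    by_contra hc; push_neg at hc
    exact hne (le_antisymm hc hle)
  obtain ⟨k, hk⟩ := hk
  have hmem : dpmCnt I + Pi.single k 1 ∈ P := by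
    refine hP.2.2.1 z hz _ (fun m => ?_)
    by_cases hm : m = k
    · subst hm
      simp only [Pi.add_apply, Pi.single_eq_same]
      omega
    · simp only [Pi.add_apply, Pi.single_eq_of_ne hm, add_zero]
      exact hle m
  have hfib : dpmCnt I k < N := lt_of_le_of_lt (dpmCnt_le I k) hcard
  have hs : ∃ s : Fin N, (k, s) ∉ I := by
    by_contra hc; push_neg at hc
    have huniv : {s : Fin N | (k, s) ∈ I} = univ := eq_univ_of_forall hc
    rw [dpmCnt, huniv, ncard_univ, Nat.card_eq_fintype_card, Fintype.card_fin] at hfib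
    omega
  obtain ⟨s, hs⟩ := hs
  have hindep : (dpmMatroid P hP N).Indep (insert (k, s) I) := by
    rw [dpmMatroid_indep, dpmCnt_insert hs]; exact hmem
  have heq := hI.eq_of_subset_indep hindep (subset_insert _ _)
  exact hs (heq ▸ mem_insert _ _)

theorem symmetric_exchange' {n : ℕ} (P : Set (Fin n → ℕ))
    (hP : IsDiscretePolymatroid P)
    (u v : Fin n → ℕ) (hu : IsBaseOf P u) (hv : IsBaseOf P v)
    (i : Fin n) (hi : v i < u i) :
    ∃ j, u j < v j ∧ IsBaseOf P (u - Pi.single i 1 + Pi.single j 1) ∧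
      IsBaseOf P (v - Pi.single j 1 + Pi.single i 1) := by
  classical
  set N := (∑ k, u k) + (∑ k, v k) + 1 with hN
  have husum : ∀ k, u k ≤ ∑ m, u m := fun k =>
    Finset.single_le_sum (f := u) (fun _ _ => Nat.zero_le _) (Finset.mem_univ k)
  have hvsum : ∀ k, v k ≤ ∑ m, v m := fun k =>
    Finset.single_le_sum (f := v) (fun _ _ => Nat.zero_le _) (Finset.mem_univ k)
  have huN : ∀ k, u k ≤ N := fun k => by have := husum k; omega
  have hvN : ∀ k, v k ≤ N := fun k => by have := hvsum k; omega
  have hvi : v i < N := by have := hvsum i; omega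
  set M := dpmMatroid P hP N with hM
  haveI hMfin : M.Finite := by
    rw [hM]; unfold dpmMatroid; infer_instance
  have hI : M.IsBase (dpmPre (N := N) u) := dpmMatroid_base_pre hP hu huN
  have hJ : M.IsBase (dpmPre (N := N) v) := dpmMatroid_base_pre hP hv hvN
  set x : Fin n × Fin N := (i, ⟨v i, hvi⟩) with hx
  have hxI : x ∈ dpmPre (N := N) u := by simpa [dpmPre, hx] using hi
  have hxJ : x ∉ dpmPre (N := N) v := by simp [dpmPre, hx]
  obtain ⟨y, ⟨hyJ, hyI⟩, hb1, hb2⟩ := matroid_symmetric_exchange hI hJ hxI hxJ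
  obtain ⟨j, s⟩ := y
  have h1 : (s : ℕ) < v j := hyJ
  have h2 : ¬ (s : ℕ) < u j := hyI
  have hjv : u j < v j := by omega
  have hdu : dpmCnt (dpmPre (N := N) u \ {x}) = u - Pi.single i 1 := by
    have hd := dpmCnt_diff (I := dpmPre (N := N) u) (e := x) hxI
    rw [dpmCnt_pre huN] at hd
    exact pi_eq_tsub hd
  have hdv : dpmCnt (dpmPre (N := N) v \ {(j, s)}) = v - Pi.single j 1 := by
    have hd := dpmCnt_diff (I := dpmPre (N := N) v) (e := (j, s)) hyJ
    rw [dpmCnt_pre hvN] at hd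
    exact pi_eq_tsub hd
  have hcnt1 : dpmCnt (insert (j, s) (dpmPre (N := N) u \ {x})) =
      u - Pi.single i 1 + Pi.single j 1 := by
    rw [dpmCnt_insert (fun h => hyI h.1), hdu]
  have hcnt2 : dpmCnt (insert x (dpmPre (N := N) v \ {(j, s)})) =
      v - Pi.single j 1 + Pi.single i 1 := by
    rw [dpmCnt_insert (fun h => hxJ h.1), hdv]
  have hc1 : (insert (j, s) (dpmPre (N := N) u \ {x})).ncard < N := by
    rw [ncard_insert_of_notMem (fun h => hyI h.1) (toFinite _),
      ncard_diff_singleton_add_one hxI (toFinite _), ← dpmCnt_sum, dpmCnt_pre huN]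
    omega
  have hc2 : (insert x (dpmPre (N := N) v \ {(j, s)})).ncard < N := by
    rw [ncard_insert_of_notMem (fun h => hxJ h.1) (toFinite _),
      ncard_diff_singleton_add_one hyJ (toFinite _), ← dpmCnt_sum, dpmCnt_pre hvN]
    omega
  refine ⟨j, hjv, ?_, ?_⟩
  · have := dpmMatroid_cobase hP hb1 hc1
    rwa [hcnt1] at this
  · have := dpmMatroid_cobase hP hb2 hc2
    rwa [hcnt2] at this

/-- Theorem 4.1 (the symmetric exchange theorem): if `u` and `v` are bases of
a discrete polymatroid `P ⊆ ℤ_+^n`, then for each `i` with `u(i) > v(i)`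
there is `j` with `u(j) < v(j)` such that both `u − ε_i + ε_j` and
`v − ε_j + ε_i` are bases of `P`. -/
theorem symmetric_exchange {n : ℕ} (P : Set (Fin n → ℕ))
    (hP : IsDiscretePolymatroid P)
    (u v : Fin n → ℕ) (hu : IsBaseOf P u) (hv : IsBaseOf P v)
    (i : Fin n) (hi : v i < u i) :
    ∃ j, u j < v j ∧ IsBaseOf P (u - Pi.single i 1 + Pi.single j 1) ∧
      IsBaseOf P (v - Pi.single j 1 + Pi.single i 1) := by
  exact symmetric_exchange' P hP u v hu hv i hi
end
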